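/- arXiv:2008.02138 — 4 statements merged into one kernel-verified Lean document; each statement's English description precedes it below -/
import Mathlib

section
/- Let 0 < ε < 1 and let α, β ∈ (0,1) satisfy 1 − β > 4α(1+ε). Then there exists N such that for every power of 2 n ≥ N and every integer k with 2 ≤ k ≤ log n there exists a k-partite graph G with vertex set [k] × [n] (k blocks of n vertices each), all of whose edges join vertices in distinct blocks, such that: (1) every α-transversal set of vertices of G is β-extendable, and (2) G contains no k-clique. -/
open scoped Classical

namespace PC

abbrev Lit (V : Type) := V × Bool
abbrev Clause (V : Type) := Finset (Lit V)
abbrev Cnf (V : Type) := Set (Clause V)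
abbrev Dnf (V : Type) := Finset (Finset (Lit V))
abbrev Conj (V : Type) := Finset (Lit V)
abbrev Restriction (V : Type) := V → Option Bool

def Lit.negate {V : Type} (l : Lit V) : Lit V := (l.1, !l.2)

section Res

variable {V : Type} [DecidableEq V]

/-- One step of a (dag-like) Resolution derivation: an axiom of `F`, a resolvent
of two previous clauses, or a weakening of a previous clause. -/
def ResStep (F : Cnf V) (prev : List (Clause V)) (C : Clause V) : Prop :=
  C ∈ F ∨
    (∃ C₁ ∈ prev, ∃ C₂ ∈ prev, ∃ x : V,
      (x, true) ∈ C₁ ∧ (x, false) ∈ C₂ ∧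
      C = C₁.erase (x, true) ∪ C₂.erase (x, false)) ∨
    (∃ C' ∈ prev, ∃ l : Lit V, C = insert l C')

/-- A Resolution refutation of `F`: a sequence of clauses, each an axiom or
derived from earlier ones, ending with the empty clause.  Its size is the
length of the list. -/
def IsResRefutation (F : Cnf V) (π : List (Clause V)) : Prop :=
  (∀ i : Fin π.length, ResStep F (π.take i.val) (π.get i)) ∧
  π.getLast? = some (∅ : Clause V)

/-- One step of a `Res(s)` derivation on `s`-DNFs (sets of terms, each a set of literals):
an axiom clause of `F` (viewed as a DNF of singleton terms), ∧-introduction, cut,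
or one of the two weakening rules. -/
def ResSStep (s : ℕ) (F : Cnf V) (prev : List (Dnf V)) (D : Dnf V) : Prop :=
  (∃ C ∈ F, D = C.image fun l => ({l} : Finset (Lit V))) ∨
  (∃ A ∈ prev, ∃ B ∈ prev, ∃ D₁ D₂ : Dnf V, ∃ T₁ T₂ : Finset (Lit V),
      A = insert T₁ D₁ ∧ B = insert T₂ D₂ ∧ (T₁ ∪ T₂).card ≤ s ∧
      D = insert (T₁ ∪ T₂) (D₁ ∪ D₂)) ∨
  (∃ A ∈ prev, ∃ B ∈ prev, ∃ D₁ D₂ : Dnf V, ∃ J : Finset (Lit V),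
      A = D₁ ∪ J.image (fun l => ({l} : Finset (Lit V))) ∧
      B = insert (J.image Lit.negate) D₂ ∧ D = D₁ ∪ D₂) ∨
  (∃ A ∈ prev, ∃ T : Finset (Lit V), T.card ≤ s ∧ D = insert T A) ∨
  (∃ A ∈ prev, ∃ D' : Dnf V, ∃ T T' : Finset (Lit V),
      A = insert T D' ∧ T' ⊆ T ∧ D = insert T' D')

/-- A `Res(s)` refutation of `F`: a sequence of `s`-DNFs, each an axiom or derived
from earlier lines, ending with the empty DNF.  Its size is the length of the list. -/
def IsResSRefutation (s : ℕ) (F : Cnf V) (π : List (Dnf V)) : Prop :=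
  (∀ D ∈ π, ∀ t ∈ D, t.card ≤ s) ∧
  (∀ i : Fin π.length, ResSStep s F (π.take i.val) (π.get i)) ∧
  π.getLast? = some (∅ : Dnf V)

/-- Applying a partial assignment to a clause: `none` if the clause is satisfied,
otherwise the clause with the falsified literals removed. -/
noncomputable def restrictClause (ρ : Restriction V) (C : Clause V) : Option (Clause V) :=
  if ∃ l ∈ C, ρ l.1 = some l.2 then none
  else some (C.filter fun l => ρ l.1 = none)

/-- The restriction of a CNF by a partial assignment. -/
def restrictCnf (ρ : Restriction V) (F : Cnf V) : Cnf V :=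
  {C' | ∃ C ∈ F, restrictClause ρ C = some C'}

/-- A tuple of literals survives a restriction if the restriction does not set
all of its literals to false. -/
def Survives {s : ℕ} (σ : Restriction V) (S : Fin s → Lit V) : Prop :=
  ¬ ∀ i : Fin s, σ (S i).1 = some (!(S i).2)

/-- Treelike Resolution refutations, as derivation trees. -/
inductive ResTree (F : Cnf V) : Clause V → Type where
  | ax {C : Clause V} (h : C ∈ F) : ResTree F C
  | res {C₁ C₂ : Clause V} (x : V) (h₁ : (x, true) ∈ C₁) (h₂ : (x, false) ∈ C₂)
      (t₁ : ResTree F C₁) (t₂ : ResTree F C₂) :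
      ResTree F (C₁.erase (x, true) ∪ C₂.erase (x, false))
  | weak {C : Clause V} (l : Lit V) (t : ResTree F C) : ResTree F (insert l C)

/-- The size (number of clauses) of a treelike Resolution derivation. -/
def ResTree.size {F : Cnf V} : {C : Clause V} → ResTree F C → ℕ
  | _, .ax _ => 1
  | _, .res _ _ _ t₁ t₂ => t₁.size + t₂.size + 1
  | _, .weak _ t => t.size + 1

/-- Feasibility of the subsystem of the rank-`r` Sherali–Adams polytope of the CNF `F`
consisting of those constraints all of whose variables `Z_D` have `D ∈ T`. -/
def SAFeasibleOn (F : Cnf V) (r : ℕ) (T : Set (Conj V)) : Prop :=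
  ∃ Z : Conj V → ℝ,
    Z ∅ = 1 ∧
    (∀ l : Lit V, ∀ D : Conj V, D.card ≤ r → D ∈ T → insert l D ∈ T →
        0 ≤ Z (insert l D) ∧ Z (insert l D) ≤ Z D) ∧
    (∀ l : Lit V, ∀ D : Conj V, D.card ≤ r → D ∈ T → insert l D ∈ T →
        insert (Lit.negate l) D ∈ T →
        Z (insert l D) + Z (insert (Lit.negate l) D) = Z D) ∧
    (∀ C ∈ F, ∀ D : Conj V, D.card ≤ r → D ∈ T → (∀ l ∈ C, insert l D ∈ T) →
        Z D ≤ ∑ l ∈ C, Z (insert l D))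

end Res

section ML

variable {V : Type} [DecidableEq V]

/-- Multilinear real polynomials over the variables `V`, represented by their
coefficients on the square-free monomials. -/
abbrev MLPoly (V : Type) := Finset V →₀ ℝ

/-- Multilinear product of multilinear polynomials (i.e. product in `ℝ[V]/(v² - v)`). -/
noncomputable def mlMul (p q : MLPoly V) : MLPoly V :=
  p.sum fun S a => q.sum fun S' b => Finsupp.single (S ∪ S') (a * b)

/-- Degree of a multilinear polynomial. -/
def mlDeg (p : MLPoly V) : ℕ := p.support.sup Finset.card

/-- All coefficients are nonnegative. -/
def NonnegCoeffs (p : MLPoly V) : Prop := ∀ S : Finset V, 0 ≤ p S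

/-- The polynomial of a literal: `v`, respectively `1 - v`. -/
noncomputable def litPoly (l : Lit V) : MLPoly V :=
  if l.2 then Finsupp.single {l.1} 1 else Finsupp.single ∅ 1 - Finsupp.single {l.1} 1

/-- The translation of the clause `l₁ ∨ … ∨ l_k` into the polynomial `l₁ + … + l_k - 1`
(whose nonnegativity expresses the clause). -/
noncomputable def clausePoly (C : Clause V) : MLPoly V :=
  (∑ l ∈ C, litPoly l) - Finsupp.single ∅ 1

/-- The constant polynomial `1`. -/
noncomputable def onePoly (V : Type) [DecidableEq V] : MLPoly V := Finsupp.single ∅ 1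

end ML

/-! ### The binary Pigeonhole principle -/

/-- The literals `ω_{i,1}^{1-a₁} ∨ … ∨ ω_{i,L}^{1-a_L}` saying that pigeon `i` does not
go to hole `a` (given in binary). -/
def pigeonLits (m L : ℕ) (i : Fin m) (a : ℕ) : Clause (Fin m × Fin L) :=
  Finset.univ.image fun j : Fin L => (((i, j) : Fin m × Fin L), !(a.testBit j.val))

/-- The binary pigeonhole principle with `m` pigeons and `n = 2^L` holes. -/
def BinPHP (m L : ℕ) : Cnf (Fin m × Fin L) :=
  {C | ∃ i i' : Fin m, i ≠ i' ∧ ∃ a : Fin (2 ^ L),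
      C = pigeonLits m L i a.val ∪ pigeonLits m L i' a.val}

/-- The binary pigeonhole principle with `m` pigeons where every pigeon must go to a
hole in `H ⊆ [2^L]`. -/
def BinPHPH (m L : ℕ) (H : Finset (Fin (2 ^ L))) : Cnf (Fin m × Fin L) :=
  {C | (∃ i i' : Fin m, i ≠ i' ∧ ∃ a ∈ H,
          C = pigeonLits m L i a.val ∪ pigeonLits m L i' a.val) ∨
       (∃ i : Fin m, ∃ a : Fin (2 ^ L), a ∉ H ∧ C = pigeonLits m L i a.val)}

/-- A `t`-bit restriction: exactly `t` bits of each pigeon are assigned. -/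
def IsTBitRestriction (t m L : ℕ) (ρ : Restriction (Fin m × Fin L)) : Prop :=
  ∀ i : Fin m, (Finset.univ.filter fun j : Fin L => ρ (i, j) ≠ none).card = t

/-- An `s`-bit restriction over the restriction `ρ`: exactly `s` bits of each pigeon,
all of them unassigned by `ρ`, are assigned. -/
def IsSBitOver (s m L : ℕ) (ρ σ : Restriction (Fin m × Fin L)) : Prop :=
  (∀ i : Fin m, (Finset.univ.filter fun j : Fin L => σ (i, j) ≠ none).card = s) ∧
  ∀ v : Fin m × Fin L, σ v ≠ none → ρ v = none

/-! ### The clique formulas -/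

/-- A graph on `[k] × [n]` is `k`-partite if its edges join vertices in distinct blocks. -/
def KPartite {k n : ℕ} (G : SimpleGraph (Fin k × Fin n)) : Prop :=
  ∀ u v : Fin k × Fin n, G.Adj u v → u.1 ≠ v.1

/-- The literals `ω_{i,1}^{1-a₁} ∨ … ∨ ω_{i,L}^{1-a_L}` saying that the vertex selected
in block `i` is not vertex `a` (given in binary). -/
def blockLits (k L : ℕ) (i : Fin k) (a : ℕ) : Clause (Fin k × Fin L) :=
  Finset.univ.image fun j : Fin L => (((i, j) : Fin k × Fin L), !(a.testBit j.val))

/-- The binary `k`-clique formula of a `k`-partite graph `G` (with `n = 2^L`). -/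
def BinClique (L : ℕ) {k n : ℕ} (G : SimpleGraph (Fin k × Fin n)) : Cnf (Fin k × Fin L) :=
  {C | ∃ i j : Fin k, ∃ a b : Fin n, i ≠ j ∧ ¬ G.Adj (i, a) (j, b) ∧
      C = blockLits k L i a.val ∪ blockLits k L j b.val}

/-- The unary `k`-clique formula of a `k`-partite graph `G`. -/
def UnClique {k n : ℕ} (G : SimpleGraph (Fin k × Fin n)) : Cnf (Fin k × Fin n) :=
  {C | (∃ i j : Fin k, ∃ a b : Fin n, i ≠ j ∧ ¬ G.Adj (i, a) (j, b) ∧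
          C = ({(((i, a) : Fin k × Fin n), false), (((j, b) : Fin k × Fin n), false)} :
            Clause (Fin k × Fin n))) ∨
       (∃ i : Fin k, C = Finset.univ.image fun a : Fin n => (((i, a) : Fin k × Fin n), true))}

/-- An `α`-transversal set of vertices: `⌊αk⌋` vertices, at most one per block. -/
def AlphaTransversal (α : ℝ) {k n : ℕ} (U : Finset (Fin k × Fin n)) : Prop :=
  U.card = ⌊α * (k : ℝ)⌋₊ ∧ ∀ u ∈ U, ∀ v ∈ U, u.1 = v.1 → u = v

/-- A `β`-total restriction: exactly `⌊β log n⌋` bits of each block are assigned. -/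
def BTotal (β : ℝ) (k L : ℕ) (σ : Restriction (Fin k × Fin L)) : Prop :=
  ∀ b : Fin k, (Finset.univ.filter fun j : Fin L => σ (b, j) ≠ none).card = ⌊β * (L : ℝ)⌋₊

/-- A restriction is consistent with vertex `a` of block `i` if on every bit of
block `i` it is unassigned or agrees with the binary representation of `a`. -/
def ConsistentWith {k L : ℕ} (σ : Restriction (Fin k × Fin L)) (i : Fin k) (a : ℕ) : Prop :=
  ∀ j : Fin L, σ (i, j) = none ∨ σ (i, j) = some (a.testBit j.val)

/-- `U` is `β`-extendable: every `β`-total restriction is consistent with some common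
neighbour of `U` in every block not meeting `U`. -/
def BExtendable (β : ℝ) (L : ℕ) {k n : ℕ} (G : SimpleGraph (Fin k × Fin n))
    (U : Finset (Fin k × Fin n)) : Prop :=
  ∀ σ : Restriction (Fin k × Fin L), BTotal β k L σ →
    ∀ b : Fin k, (∀ u ∈ U, u.1 ≠ b) →
      ∃ a : Fin n, (∀ u ∈ U, G.Adj (b, a) u) ∧ ConsistentWith σ b a.val

/-- An `s`-restriction: exactly `⌊log n / 2^(s+1)⌋` bits of each block are assigned. -/
def IsSRestriction (s k L : ℕ) (ρ : Restriction (Fin k × Fin L)) : Prop :=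
  ∀ i : Fin k, (Finset.univ.filter fun j : Fin L => ρ (i, j) ≠ none).card = L / 2 ^ (s + 1)

/-! ### Numerical functions -/

def pe (s : ℕ) : ℕ := 2 ^ (s ^ 2 + 3 * s)

def de (s : ℕ) : ℕ := (s * pe s) ^ s

noncomputable def deltaC : ℝ := 1 / (2 * 96 ^ 2)

def xi : ℕ → ℕ
  | 0 => 0
  | 1 => 1
  | s + 2 => xi (s + 1) + 1 + (s + 2)

/-! ### The binary ordering principle -/

/-- Variables of `Bin-OP_n`: order variables `ν_{i,j}` and witness bits `ω_{j,ℓ}`. -/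
abbrev OPV (n L : ℕ) := Sum (Fin n × Fin n) (Fin n × Fin L)

/-- The binary ordering principle `Bin-OP_n` (with `n = 2^L`). -/
def BinOP (n L : ℕ) : Cnf (OPV n L) :=
  {C | (∃ i : Fin n, C = ({((Sum.inl (i, i) : OPV n L), false)} : Clause (OPV n L))) ∨
       (∃ i j k : Fin n, C = ({((Sum.inl (i, j) : OPV n L), false),
          ((Sum.inl (j, k) : OPV n L), false),
          ((Sum.inl (i, k) : OPV n L), true)} : Clause (OPV n L))) ∨
       (∃ j a : Fin n, C = insert ((Sum.inl (a, j) : OPV n L), true)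
          (Finset.univ.image fun ℓ : Fin L =>
            (((Sum.inr (j, ℓ)) : OPV n L), !(a.val.testBit ℓ.val))))}

/-! ### The (linear) ordering principle, for Sherali–Adams with equalities -/

/-- Variables of the (unary) ordering principle: `v_{i,j}` (inl) and `w_{i,j}` (inr). -/
abbrev OPW (n : ℕ) := Sum (Fin n × Fin n) (Fin n × Fin n)

def vLit (n : ℕ) (i j : Fin n) : Lit (OPW n) := (Sum.inl (i, j), true)

def wLit (n : ℕ) (i j : Fin n) : Lit (OPW n) := (Sum.inr (i, j), true)

/-- Feasibility of the subsystem of the rank-`r` Sherali–Adams polytope of the ordering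
principle with equality, consisting of the constraints with all variables in `T`. -/
def OPEqFeasibleOn (n r : ℕ) (T : Set (Conj (OPW n))) : Prop :=
  ∃ Z : Conj (OPW n) → ℝ,
    Z ∅ = 1 ∧
    (∀ l : Lit (OPW n), ∀ D : Conj (OPW n), D.card ≤ r → D ∈ T → insert l D ∈ T →
        0 ≤ Z (insert l D) ∧ Z (insert l D) ≤ Z D) ∧
    (∀ l : Lit (OPW n), ∀ D : Conj (OPW n), D.card ≤ r → D ∈ T → insert l D ∈ T →
        insert (Lit.negate l) D ∈ T →
        Z (insert l D) + Z (insert (Lit.negate l) D) = Z D) ∧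
    (∀ i : Fin n, ∀ D : Conj (OPW n), D.card ≤ r → D ∈ T → insert (vLit n i i) D ∈ T →
        Z (insert (vLit n i i) D) = 0) ∧
    (∀ i j k : Fin n, ∀ D : Conj (OPW n), D.card ≤ r → D ∈ T →
        insert (vLit n i k) D ∈ T → insert (vLit n i j) D ∈ T → insert (vLit n j k) D ∈ T →
        Z (insert (vLit n i j) D) + Z (insert (vLit n j k) D) ≤
          Z (insert (vLit n i k) D) + Z D) ∧
    (∀ i j : Fin n, ∀ D : Conj (OPW n), D.card ≤ r → D ∈ T →
        insert (vLit n i j) D ∈ T → insert (wLit n i j) D ∈ T →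
        Z (insert (wLit n i j) D) ≤ Z (insert (vLit n i j) D)) ∧
    (∀ j : Fin n, ∀ D : Conj (OPW n), D.card ≤ r → D ∈ T →
        (∀ i : Fin n, insert (wLit n i j) D ∈ T) →
        (∑ i : Fin n, Z (insert (wLit n i j) D)) = Z D)

/-- The monomial `v_{i,j}` as a multilinear polynomial. -/
noncomputable def vPoly (n : ℕ) (i j : Fin n) : MLPoly (OPW n) :=
  Finsupp.single {Sum.inl (i, j)} 1

/-- The monomial `w_{i,j}` as a multilinear polynomial. -/
noncomputable def wPoly (n : ℕ) (i j : Fin n) : MLPoly (OPW n) :=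
  Finsupp.single {Sum.inr (i, j)} 1

/-- The axioms of the linear ordering principle `LOP_n` as linear polynomials `q`
(each axiom being the inequality `q ≥ 0`). -/
def LOPpolys (n : ℕ) : Set (MLPoly (OPW n)) :=
  {p | (∃ i : Fin n, p = vPoly n i i) ∨ (∃ i : Fin n, p = -vPoly n i i) ∨
       (∃ i j k : Fin n, p = vPoly n i k - vPoly n i j - vPoly n j k + onePoly (OPW n)) ∨
       (∃ i j : Fin n, p = vPoly n i j - wPoly n i j) ∨
       (∃ i j : Fin n, i ≠ j ∧ p = vPoly n i j + vPoly n j i - onePoly (OPW n)) ∨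
       (∃ j : Fin n, p = (∑ i : Fin n, wPoly n i j) - onePoly (OPW n))}

namespace ExtAux

private lemma split_sum_pow (T : Finset ℕ) :
    ∑ j ∈ T, 2 ^ j =
      (if 0 ∈ T then 1 else 0) + 2 * ∑ j ∈ (T.erase 0).image (· - 1), 2 ^ j := by
  classical
  have hinj : Set.InjOn (· - 1) (T.erase 0 : Finset ℕ) := by
    intro x hx y hy h
    have hx0 : x ≠ 0 := (Finset.mem_erase.mp hx).1
    have hy0 : y ≠ 0 := (Finset.mem_erase.mp hy).1
    simp only at h
    omega
  have h1 : ∑ j ∈ (T.erase 0).image (· - 1), 2 ^ j = ∑ x ∈ T.erase 0, 2 ^ (x - 1) :=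
    Finset.sum_image (fun x hx y hy h => hinj hx hy h)
  have h2 : 2 * ∑ x ∈ T.erase 0, 2 ^ (x - 1) = ∑ x ∈ T.erase 0, 2 ^ x := by
    rw [Finset.mul_sum]
    refine Finset.sum_congr rfl fun x hx => ?_
    have hx0 : x ≠ 0 := (Finset.mem_erase.mp hx).1
    rw [← pow_succ']
    congr 1
    omega
  rw [h1, h2]
  by_cases h0 : 0 ∈ T
  · rw [← Finset.sum_erase_add T _ h0]; simp [h0, add_comm]
  · simp [h0, Finset.erase_eq_of_notMem h0]

private lemma mem_shift (T : Finset ℕ) (i : ℕ) :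
    i ∈ (T.erase 0).image (· - 1) ↔ i + 1 ∈ T := by
  simp only [Finset.mem_image, Finset.mem_erase]
  constructor
  · rintro ⟨x, ⟨hx0, hxT⟩, rfl⟩
    have : x - 1 + 1 = x := by omega
    rwa [this]
  · intro h
    exact ⟨i + 1, ⟨by omega, h⟩, by omega⟩

lemma testBit_sum_two_pow (T : Finset ℕ) (i : ℕ) :
    (∑ j ∈ T, 2 ^ j).testBit i = true ↔ i ∈ T := by
  classical
  induction i generalizing T with
  | zero =>
    rw [split_sum_pow T, Nat.testBit_zero]
    by_cases h0 : 0 ∈ T <;> simp [h0, Nat.add_mul_mod_self_left, Nat.mul_mod_right]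
  | succ i ih =>
    rw [split_sum_pow T, Nat.testBit_succ]
    have : ((if 0 ∈ T then 1 else 0) + 2 * ∑ j ∈ (T.erase 0).image (· - 1), 2 ^ j) / 2
        = ∑ j ∈ (T.erase 0).image (· - 1), 2 ^ j := by
      by_cases h0 : 0 ∈ T <;> simp [h0] <;> omega
    rw [this, ih, mem_shift]

lemma sum_two_pow_lt (L : ℕ) (T : Finset ℕ) (hT : T ⊆ Finset.range L) :
    ∑ j ∈ T, 2 ^ j < 2 ^ L := by
  calc ∑ j ∈ T, 2 ^ j ≤ ∑ j ∈ Finset.range L, 2 ^ j :=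
        Finset.sum_le_sum_of_subset hT
    _ < 2 ^ L := by
        clear hT
        induction L with
        | zero => simp
        | succ L ihL => rw [Finset.sum_range_succ, pow_succ]; omega

set_option maxHeartbeats 1000000 in
lemma key_arith (ε α β : ℝ) (hε0 : 0 < ε)
    (hα0 : 0 < α) (hβ0 : 0 < β) (hβ1 : β < 1)
    (hαβ : 1 - β > 4 * α * (1 + ε)) (k L : ℕ) (hk : 2 ≤ k) (hkL : k ≤ L) :
    ⌊α * (k : ℝ)⌋₊ * (2 * (L / (k - 1) + 1) - 1) ≤ L - ⌊β * (L : ℝ)⌋₊ := by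
  set m := ⌊α * (k : ℝ)⌋₊ with hm
  set tn := L / (k - 1) + 1 with htn
  have hα14 : α < 1 / 4 := by nlinarith
  have hβLnn : 0 ≤ β * (L : ℝ) := by positivity
  have hfloorβ : (⌊β * (L : ℝ)⌋₊ : ℝ) ≤ β * L := Nat.floor_le hβLnn
  have hLpos : 0 < L := by omega
  have hLR : (0 : ℝ) < L := by exact_mod_cast hLpos
  have hβL_le : ⌊β * (L : ℝ)⌋₊ ≤ L := by
    have : (⌊β * (L : ℝ)⌋₊ : ℝ) ≤ (L : ℝ) := hfloorβ.trans (by nlinarith)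
    exact_mod_cast this
  rcases Nat.eq_zero_or_pos m with hm0 | hm1
  · simp [hm0]
  have hK2 : (2 : ℝ) ≤ (k : ℝ) := by exact_mod_cast hk
  have hKL : (k : ℝ) ≤ (L : ℝ) := by exact_mod_cast hkL
  have hmR : (m : ℝ) ≤ α * k := Nat.floor_le (by positivity)
  have h1ak : 1 ≤ α * k := by
    calc (1 : ℝ) ≤ (m : ℝ) := by exact_mod_cast hm1
      _ ≤ α * k := hmR
  have hdivN : (k - 1) * (tn - 1) ≤ L := by
    simp only [htn, Nat.add_sub_cancel]
    exact Nat.mul_div_le L (k - 1)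
  have h1t : (1 : ℕ) ≤ tn := by rw [htn]; exact Nat.succ_le_succ (Nat.zero_le _)
  have hdivR : ((k : ℝ) - 1) * ((tn : ℝ) - 1) ≤ (L : ℝ) := by
    have h1 : (1 : ℕ) ≤ k := by omega
    have := (Nat.cast_le (α := ℝ)).mpr hdivN
    push_cast [h1, h1t] at this
    convert this using 2 <;> push_cast <;> ring_nf
  have hcastL : ((L - ⌊β * (L : ℝ)⌋₊ : ℕ) : ℝ) = (L : ℝ) - (⌊β * (L : ℝ)⌋₊ : ℝ) := by
    push_cast [hβL_le]; ring
  have hcastLHS : ((m * (2 * tn - 1) : ℕ) : ℝ) = (m : ℝ) * (2 * (tn : ℝ) - 1) := by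
    have : (1 : ℕ) ≤ 2 * tn := by omega
    push_cast [this]; ring
  rw [← Nat.cast_le (α := ℝ), hcastL, hcastLHS]
  have hT1 : (0 : ℝ) ≤ (tn : ℝ) - 1 := by
    have : (1 : ℝ) ≤ (tn : ℝ) := by exact_mod_cast h1t
    linarith
  have hK43 : (k : ℝ) ≤ (4 / 3) * ((k : ℝ) - 1) := by nlinarith
  have s1 : (m : ℝ) * ((tn : ℝ) - 1) ≤ α * (k : ℝ) * ((tn : ℝ) - 1) :=
    mul_le_mul_of_nonneg_right hmR hT1
  have s2 : α * (k : ℝ) * ((tn : ℝ) - 1) ≤ (4 / 3) * α * (((k : ℝ) - 1) * ((tn : ℝ) - 1)) := by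
    nlinarith [mul_nonneg hα0.le hT1]
  have s3 : (4 / 3) * α * (((k : ℝ) - 1) * ((tn : ℝ) - 1)) ≤ (4 / 3) * α * (L : ℝ) :=
    mul_le_mul_of_nonneg_left hdivR (by positivity)
  have s4 : (m : ℝ) ≤ α * (L : ℝ) := hmR.trans (by nlinarith)
  have s5 : (11 / 3) * α * (L : ℝ) ≤ (4 * α * (1 + ε)) * (L : ℝ) := by nlinarith
  have s6 : (4 * α * (1 + ε)) * (L : ℝ) ≤ (1 - β) * (L : ℝ) := by nlinarith
  have s7 : (1 - β) * (L : ℝ) ≤ (L : ℝ) - (⌊β * (L : ℝ)⌋₊ : ℝ) := by nlinarith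
  have key : (m : ℝ) * (2 * (tn : ℝ) - 1) = 2 * ((m : ℝ) * ((tn : ℝ) - 1)) + (m : ℝ) := by ring
  linarith [s1, s2, s3, s4, s5, s6, s7]

private lemma div_ne_of_dist_ge {t x y : ℕ} (ht : 0 < t) (h : t ≤ Nat.dist x y) :
    x / t ≠ y / t := by
  have hd : Nat.dist x y = (x - y) + (y - x) := rfl
  rcases le_total x y with hxy | hxy
  · have hxt : x + t ≤ y := by omega
    have : x / t + 1 ≤ y / t := by
      rw [← Nat.add_div_right x ht]
      exact Nat.div_le_div_right hxt
    omega
  · have hxt : y + t ≤ x := by omega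
    have : y / t + 1 ≤ x / t := by
      rw [← Nat.add_div_right y ht]
      exact Nat.div_le_div_right hxt
    omega

end ExtAux

namespace ExtAux

/-- Hamming weight of the first `L` bits. -/
def wtL (L a : ℕ) : ℕ := ((Finset.range L).filter fun j => a.testBit j).card

lemma wtL_le (L a : ℕ) : wtL L a ≤ L := by
  refine (Finset.card_filter_le _ _).trans ?_
  simp

/-- The graph: distinct blocks and Hamming weights at distance at least `t`. -/
def extGraph (L k n t : ℕ) : SimpleGraph (Fin k × Fin n) where
  Adj u v := u.1 ≠ v.1 ∧ t ≤ Nat.dist (wtL L u.2.val) (wtL L v.2.val)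
  symm := by
    refine ⟨?_⟩
    intro u v h
    exact ⟨h.1.symm, by rw [Nat.dist_comm]; exact h.2⟩
  loopless := by
    refine ⟨?_⟩
    intro u h
    exact h.1 rfl

end ExtAux


/-- **Extension Lemma.**  For admissible `ε, α, β` and all sufficiently large powers of two
`n = 2^L` and `2 ≤ k ≤ log n`, there is a `k`-partite graph on `[k] × [n]` all of whose
`α`-transversal sets are `β`-extendable and which contains no `k`-clique. -/
theorem extension_lemma (ε α β : ℝ) (hε0 : 0 < ε) (hε1 : ε < 1)
    (hα0 : 0 < α) (hα1 : α < 1) (hβ0 : 0 < β) (hβ1 : β < 1)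
    (hαβ : 1 - β > 4 * α * (1 + ε)) :
    ∃ N : ℕ, ∀ L n k : ℕ, n = 2 ^ L → N ≤ n → 2 ≤ k → k ≤ L →
      ∃ G : SimpleGraph (Fin k × Fin n),
        KPartite G ∧
        (∀ U : Finset (Fin k × Fin n), AlphaTransversal α U → BExtendable β L G U) ∧
        G.CliqueFree k := by
  classical
  refine ⟨0, ?_⟩
  intro L n k hn _ hk2 hkL
  subst hn
  set t := L / (k - 1) + 1 with ht
  have htpos : 0 < t := Nat.succ_pos _
  refine ⟨ExtAux.extGraph L k (2 ^ L) t, fun u v h => h.1, ?_, ?_⟩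
  · -- extendability
    intro U hU σ hσ b hb
    have hUcard : U.card = ⌊α * (k : ℝ)⌋₊ := hU.1
    set F := L - ⌊β * (L : ℝ)⌋₊ with hF
    set Atrue : Finset (Fin L) := Finset.univ.filter (fun j => σ (b, j) = some true)
      with hAtrue
    set Fr : Finset (Fin L) := Finset.univ.filter (fun j => σ (b, j) = none) with hFrdef
    set c := Atrue.card with hc
    -- the free set has F elements
    have hAs : (Finset.univ.filter fun j : Fin L => ¬ (σ (b, j) = none)).card
        = ⌊β * (L : ℝ)⌋₊ := by
      have := hσ b
      simpa [ne_eq] using this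
    have hFrcard : Fr.card = F := by
      have h := Finset.card_filter_add_card_filter_not
        (s := (Finset.univ : Finset (Fin L))) (p := fun j : Fin L => σ (b, j) = none)
      rw [hAs] at h
      simp only [Finset.card_univ, Fintype.card_fin] at h
      have hβle : ⌊β * (L : ℝ)⌋₊ ≤ L := by omega
      rw [hFrdef, hF]
      omega
    -- a good weight exists
    have hkey : U.card * (2 * t - 1) ≤ F := by
      rw [hUcard, ht, hF]
      exact ExtAux.key_arith ε α β hε0 hα0 hβ0 hβ1 hαβ k L hk2 hkL
    set Good := (Finset.Icc c (c + F)).filter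
      (fun W => ∀ u ∈ U, t ≤ Nat.dist W (ExtAux.wtL L u.2.val)) with hGood
    set Bad := (Finset.Icc c (c + F)).filter
      (fun W => ¬ ∀ u ∈ U, t ≤ Nat.dist W (ExtAux.wtL L u.2.val)) with hBad
    have hBadsub : Bad ⊆ U.biUnion
        (fun u => Finset.Icc (ExtAux.wtL L u.2.val - (t - 1)) (ExtAux.wtL L u.2.val + (t - 1))) := by
      intro W hW
      rw [hBad, Finset.mem_filter] at hW
      obtain ⟨-, hW2⟩ := hW
      push_neg at hW2
      obtain ⟨u, hu, hd⟩ := hW2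
      rw [Finset.mem_biUnion]
      refine ⟨u, hu, ?_⟩
      rw [Finset.mem_Icc]
      have hdd : Nat.dist W (ExtAux.wtL L u.2.val)
          = (W - ExtAux.wtL L u.2.val) + (ExtAux.wtL L u.2.val - W) := rfl
      omega
    have hBadcard : Bad.card ≤ U.card * (2 * t - 1) := by
      refine (Finset.card_le_card hBadsub).trans ?_
      refine (Finset.card_biUnion_le).trans ?_
      calc ∑ u ∈ U, (Finset.Icc (ExtAux.wtL L u.2.val - (t - 1))
              (ExtAux.wtL L u.2.val + (t - 1))).card
          ≤ ∑ _u ∈ U, (2 * t - 1) := by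
            refine Finset.sum_le_sum fun u _ => ?_
            rw [Nat.card_Icc]
            omega
        _ = U.card * (2 * t - 1) := by rw [Finset.sum_const, smul_eq_mul]
    have hGB : Good.card + Bad.card = F + 1 := by
      rw [hGood, hBad, Finset.card_filter_add_card_filter_not, Nat.card_Icc]
      omega
    have hGoodne : Good.Nonempty := by
      rw [← Finset.card_pos]
      omega
    obtain ⟨W, hWg⟩ := hGoodne
    rw [hGood, Finset.mem_filter, Finset.mem_Icc] at hWg
    obtain ⟨⟨hWc, hWcF⟩, hWgood⟩ := hWg
    -- build the vertex a with weight W consistent with σ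
    have hWF : W - c ≤ Fr.card := by rw [hFrcard]; omega
    obtain ⟨S, hSFr, hScard⟩ := Finset.exists_subset_card_eq (s := Fr) (n := W - c) hWF
    have hdisj : Disjoint Atrue S := by
      rw [Finset.disjoint_left]
      intro j hjA hjS
      have h1 : σ (b, j) = some true := (Finset.mem_filter.mp hjA).2
      have h2 : σ (b, j) = none := (Finset.mem_filter.mp (hSFr hjS)).2
      rw [h1] at h2
      exact Option.some_ne_none _ h2
    set T : Finset (Fin L) := Atrue ∪ S with hT
    have hTcard : T.card = W := by
      rw [hT, Finset.card_union_of_disjoint hdisj, hScard, ← hc]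
      omega
    set Tn : Finset ℕ := T.image Fin.val with hTn
    have hTnsub : Tn ⊆ Finset.range L := by
      intro i hi
      rw [hTn, Finset.mem_image] at hi
      obtain ⟨x, -, rfl⟩ := hi
      exact Finset.mem_range.mpr x.isLt
    have hmemTn : ∀ j : Fin L, (j.val ∈ Tn ↔ j ∈ T) := by
      intro j
      rw [hTn]
      constructor
      · intro h
        obtain ⟨x, hx, hxv⟩ := Finset.mem_image.mp h
        rwa [← Fin.val_injective hxv]
      · intro h
        exact Finset.mem_image_of_mem _ h
    set a' : ℕ := ∑ j ∈ Tn, 2 ^ j with ha'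
    have ha'lt : a' < 2 ^ L := ExtAux.sum_two_pow_lt L Tn hTnsub
    have hbit : ∀ i, a'.testBit i = true ↔ i ∈ Tn :=
      fun i => ExtAux.testBit_sum_two_pow Tn i
    have hwta : ExtAux.wtL L a' = W := by
      have hfil : (Finset.range L).filter (fun j => a'.testBit j) = Tn := by
        ext i
        simp only [Finset.mem_filter, Finset.mem_range]
        constructor
        · rintro ⟨-, h⟩
          exact (hbit i).mp h
        · intro h
          exact ⟨Finset.mem_range.mp (hTnsub h), (hbit i).mpr h⟩
      rw [ExtAux.wtL, hfil, hTn, Finset.card_image_of_injective _ Fin.val_injective, hTcard]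
    refine ⟨⟨a', ha'lt⟩, ?_, ?_⟩
    · intro u hu
      refine ⟨Ne.symm (hb u hu), ?_⟩
      show t ≤ Nat.dist (ExtAux.wtL L a') (ExtAux.wtL L u.2.val)
      rw [hwta]
      exact hWgood u hu
    · intro j
      rcases hσj : σ (b, j) with _ | v
      · exact Or.inl rfl
      · refine Or.inr ?_
        rcases v with _ | _
        · -- v = false
          have hjA : j ∉ Atrue := by
            rw [hAtrue, Finset.mem_filter]
            rintro ⟨-, h⟩
            rw [hσj] at h
            exact Bool.noConfusion (Option.some.inj h)
          have hjS : j ∉ S := by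
            intro h
            have := (Finset.mem_filter.mp (hSFr h)).2
            rw [hσj] at this
            exact Option.some_ne_none _ this
          have hjT : j ∉ T := by
            rw [hT, Finset.mem_union]
            rintro (h | h)
            exacts [hjA h, hjS h]
          have : a'.testBit j.val = false := by
            rcases Bool.eq_false_or_eq_true (a'.testBit j.val) with h | h
            · exact absurd ((hmemTn j).mp ((hbit j.val).mp h)) hjT
            · exact h
          rw [this]
        · -- v = true
          have hjA : j ∈ Atrue := by
            rw [hAtrue, Finset.mem_filter]
            exact ⟨Finset.mem_univ j, hσj⟩
          have hjT : j ∈ T := by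
            rw [hT, Finset.mem_union]
            exact Or.inl hjA
          have : a'.testBit j.val = true := (hbit j.val).mpr ((hmemTn j).mpr hjT)
          rw [this]
  · -- clique-freeness
    intro s hs
    have hcard : s.card = k := hs.2
    have hclique := hs.1
    have hinj : Set.InjOn (fun v : Fin k × Fin (2 ^ L) => ExtAux.wtL L v.2.val / t) ↑s := by
      intro u hu v hv hf
      by_contra hne
      exact ExtAux.div_ne_of_dist_ge htpos (hclique hu hv hne).2 hf
    have hmaps : ∀ v ∈ s, ExtAux.wtL L v.2.val / t ∈ Finset.range (k - 1) := by
      intro v hv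
      rw [Finset.mem_range]
      have hk1 : 0 < k - 1 := by omega
      have hLt : L < t * (k - 1) := by
        refine (Nat.div_lt_iff_lt_mul hk1).mp ?_
        omega
      refine (Nat.div_lt_iff_lt_mul htpos).mpr ?_
      calc ExtAux.wtL L v.2.val ≤ L := ExtAux.wtL_le L _
        _ < t * (k - 1) := hLt
        _ = (k - 1) * t := Nat.mul_comm _ _
    have hle := Finset.card_le_card_of_injOn _ hmaps hinj
    rw [hcard, Finset.card_range] at hle
    omega

end PC
end

section
/- Let 0 < ε < 1, set α = 1/(16(1+2ε)), β = 3/4 and δ = 1/(2·96²). There exists N such that for every power of 2 n ≥ N and every integer k with 2·16·96² < k ≤ log n the following holds: if G is a k-partite graph with vertex set [k] × [n], edges only between distinct blocks, such that every α-transversal set of vertices of G is β-extendable and G contains no k-clique, then for every 1-restriction ρ (a partial assignment setting exactly ⌊(log n)/4⌋ of the variables ω_{i,1},…,ω_{i,log n} of each block i ∈ [k]), every Resolution refutation of Bin-Clique_k^n(G)↾ρ has size at least n^{δ(k−1)/16}. -/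
open scoped Classical

namespace PC

/-! ### Auxiliary development for the base case -/

section BaseCaseAux

open Finset

variable {k n L : ℕ}

/-- Satisfaction of a clause by a total assignment. -/
def TSat (η : Fin k × Fin L → Bool) (C : Clause (Fin k × Fin L)) : Prop :=
  ∃ l ∈ C, η l.1 = l.2

/-- A total assignment agrees with a restriction. -/
def TAgrees (τ : Restriction (Fin k × Fin L)) (η : Fin k × Fin L → Bool) : Prop :=
  ∀ v (b : Bool), τ v = some b → η v = b

lemma exists_testBit_ne (hn : n = 2 ^ L) (x y : Fin n) (h : x ≠ y) :
    ∃ j : Fin L, x.val.testBit j.val ≠ y.val.testBit j.val := by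
  by_contra hc
  push_neg at hc
  apply h
  apply Fin.ext
  apply Nat.eq_of_testBit_eq
  intro i
  by_cases hi : i < L
  · exact hc ⟨i, hi⟩
  · have h2 : (2:ℕ) ^ L ≤ 2 ^ i := Nat.pow_le_pow_right (by norm_num) (le_of_not_gt hi)
    rw [Nat.testBit_lt_two_pow (lt_of_lt_of_le (hn ▸ x.isLt) h2),
      Nat.testBit_lt_two_pow (lt_of_lt_of_le (hn ▸ y.isLt) h2)]

/-- Context for the adversary argument. -/
structure Ctx (k n L : ℕ) where
  G : SimpleGraph (Fin k × Fin n)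
  τ : Restriction (Fin k × Fin L)
  m : ℕ
  acnt : ℕ
  tt : ℕ
  B : ℕ
  hn : n = 2 ^ L
  hkm : m + 1 ≤ k
  hBL : B < L
  htt : acnt + tt = B
  htt1 : 1 ≤ tt
  hacnt : ∀ i : Fin k,
    ((Finset.univ : Finset (Fin L)).filter fun j => τ (i, j) ≠ none).card = acnt
  hBeq : ⌊(3/4 : ℝ) * (L : ℝ)⌋₊ = B
  hExt : ∀ U : Finset (Fin k × Fin n), U.card = m →
      (∀ u ∈ U, ∀ v ∈ U, u.1 = v.1 → u = v) →
      ∀ σ : Restriction (Fin k × Fin L), BTotal (3/4) k L σ →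
      ∀ b : Fin k, (∀ u ∈ U, u.1 ≠ b) →
      ∃ a : Fin n, (∀ u ∈ U, G.Adj (b, a) u) ∧ ConsistentWith σ b a.val

lemma Ctx.npos (X : Ctx k n L) : 0 < n := X.hn ▸ Nat.two_pow_pos L

/-- Membership in the set of clique-respecting assignments for a set `R` of blocks. -/
def Ctx.Hmem (X : Ctx k n L) (R : Finset (Fin k)) (η : Fin k × Fin L → Bool) : Prop :=
  TAgrees X.τ η ∧ ∃ g : Fin k → Fin n,
    (∀ i ∈ R, ∀ j ∈ R, i ≠ j → X.G.Adj (i, g i) (j, g j)) ∧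
    (∀ i ∈ R, ∀ jj : Fin L, η (i, jj) = (g i).val.testBit jj.val)

/-- `C` is forced by some set of at most `r` blocks. -/
def Ctx.Forced (X : Ctx k n L) (r : ℕ) (C : Clause (Fin k × Fin L)) : Prop :=
  ∃ R : Finset (Fin k), R.card ≤ r ∧ ∀ η, X.Hmem R η → TSat η C

lemma Ctx.Hmem_anti (X : Ctx k n L) {R R' : Finset (Fin k)} (h : R' ⊆ R)
    {η : Fin k × Fin L → Bool} (hη : X.Hmem R η) : X.Hmem R' η := by
  obtain ⟨ha, g, hadj, hbits⟩ := hη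
  exact ⟨ha, g, fun i hi j hj => hadj i (h hi) j (h hj), fun i hi => hbits i (h hi)⟩

lemma Ctx.forced_mono (X : Ctx k n L) {r r' : ℕ} (h : r ≤ r') {C : Clause (Fin k × Fin L)}
    (hf : X.Forced r C) : X.Forced r' C := by
  obtain ⟨R, hR, hw⟩ := hf
  exact ⟨R, hR.trans h, hw⟩

lemma Ctx.forced_weak (X : Ctx k n L) {r : ℕ} {C : Clause (Fin k × Fin L)}
    (hf : X.Forced r C) (l : Lit (Fin k × Fin L)) : X.Forced r (insert l C) := by
  obtain ⟨R, hR, hw⟩ := hf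
  refine ⟨R, hR, fun η hη => ?_⟩
  obtain ⟨l', hl', hs⟩ := hw η hη
  exact ⟨l', Finset.mem_insert_of_mem hl', hs⟩

lemma Ctx.forced_res (X : Ctx k n L) {r₁ r₂ : ℕ} {C₁ C₂ : Clause (Fin k × Fin L)}
    {x : Fin k × Fin L} (hx1 : (x, true) ∈ C₁) (hx2 : (x, false) ∈ C₂)
    (hf1 : X.Forced r₁ C₁) (hf2 : X.Forced r₂ C₂) :
    X.Forced (r₁ + r₂) (C₁.erase (x, true) ∪ C₂.erase (x, false)) := by
  obtain ⟨R₁, hR₁, hw₁⟩ := hf1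
  obtain ⟨R₂, hR₂, hw₂⟩ := hf2
  refine ⟨R₁ ∪ R₂, le_trans (Finset.card_union_le _ _) (by omega), fun η hη => ?_⟩
  obtain ⟨l₁, hl₁, hs₁⟩ := hw₁ η (X.Hmem_anti Finset.subset_union_left hη)
  obtain ⟨l₂, hl₂, hs₂⟩ := hw₂ η (X.Hmem_anti Finset.subset_union_right hη)
  by_cases h1 : l₁ = (x, true)
  · by_cases h2 : l₂ = (x, false)
    · exfalso
      rw [h1] at hs₁
      rw [h2] at hs₂
      simp at hs₁ hs₂
      rw [hs₁] at hs₂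
      exact Bool.noConfusion hs₂
    · exact ⟨l₂, Finset.mem_union_right _ (Finset.mem_erase.mpr ⟨h2, hl₂⟩), hs₂⟩
  · exact ⟨l₁, Finset.mem_union_left _ (Finset.mem_erase.mpr ⟨h1, hl₁⟩), hs₁⟩

/-- The central extension lemma: a small clique consistent with `τ` can be extended
into any new block, with any small prescribed bit pattern. -/
lemma Ctx.extend (X : Ctx k n L) (R : Finset (Fin k)) (hR : R.card ≤ X.m)
    (b : Fin k) (hb : b ∉ R) (g : Fin k → Fin n)
    (hadj : ∀ i ∈ R, ∀ j ∈ R, i ≠ j → X.G.Adj (i, g i) (j, g j))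
    (hcons : ∀ i ∈ R, ConsistentWith X.τ i (g i).val)
    (D : Finset (Fin L)) (hD : ∀ j ∈ D, X.τ (b, j) = none)
    (hDc : D.card + 1 ≤ X.tt) (vals : Fin L → Bool) :
    ∃ a : Fin n, (∀ i ∈ R, X.G.Adj (b, a) (i, g i)) ∧
      ConsistentWith X.τ b a.val ∧ (∀ j ∈ D, a.val.testBit j.val = vals j) := by
  classical
  set A : Finset (Fin L) := Finset.univ.filter (fun j => X.τ (b, j) ≠ none) with hA
  have hAcard : A.card = X.acnt := X.hacnt b
  have hdisj : Disjoint A D := by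
    rw [Finset.disjoint_left]
    intro j hj hjD
    have hj' : X.τ (b, j) ≠ none := (Finset.mem_filter.mp hj).2
    exact hj' (hD j hjD)
  have hS0 : (A ∪ D).card = X.acnt + D.card := by
    rw [Finset.card_union_of_disjoint hdisj, hAcard]
  have hS0B : (A ∪ D).card + 1 ≤ X.B := by
    have := X.htt
    omega
  have hLuniv : (Finset.univ : Finset (Fin L)).card = L := by simp
  have hcompl : X.B - (A ∪ D).card ≤ (Finset.univ \ (A ∪ D)).card := by
    rw [Finset.card_sdiff_of_subset (Finset.subset_univ _), hLuniv]
    have := X.hBL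
    omega
  obtain ⟨P, hPsub, hPcard⟩ := Finset.exists_subset_card_eq hcompl
  have hPdisj : ∀ j ∈ P, j ∉ A ∪ D := fun j hj =>
    (Finset.mem_sdiff.mp (hPsub hj)).2
  -- the β-total restriction
  set σt : Restriction (Fin k × Fin L) := fun v =>
    if v.1 = b then
      (if v.2 ∈ A then X.τ (b, v.2) else if v.2 ∈ D then some (vals v.2)
        else if v.2 ∈ P then some false else none)
    else (if v.2.val < X.B then some false else none) with hσt
  have hBtot : BTotal (3/4) k L σt := by
    intro i
    rw [X.hBeq]
    by_cases hib : i = b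
    · subst hib
      have hset : (Finset.univ.filter fun j : Fin L => σt (i, j) ≠ none) = (A ∪ D) ∪ P := by
        ext j
        simp only [Finset.mem_filter, Finset.mem_univ, true_and, Finset.mem_union, hσt]
        by_cases h1 : j ∈ A
        · simp only [if_pos rfl, if_pos h1]
          have := (Finset.mem_filter.mp h1).2
          tauto
        · by_cases h2 : j ∈ D
          · simp only [if_pos rfl, if_neg h1, if_pos h2]
            simp
            tauto
          · by_cases h3 : j ∈ P
            · simp only [if_pos rfl, if_neg h1, if_neg h2, if_pos h3]
              simp
              tauto
            · simp only [if_pos rfl, if_neg h1, if_neg h2, if_neg h3]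
              tauto
      rw [hset, Finset.card_union_of_disjoint (by
        rw [Finset.disjoint_left]
        intro j hj hjP
        exact hPdisj j hjP hj), hS0, hPcard, hS0]
      have := X.htt
      omega
    · have hset : (Finset.univ.filter fun j : Fin L => σt (i, j) ≠ none)
          = (Finset.univ.filter fun j : Fin L => j.val < X.B) := by
        ext j
        simp only [Finset.mem_filter, Finset.mem_univ, true_and, hσt, if_neg hib]
        by_cases h : j.val < X.B <;> simp [h]
      rw [hset]
      exact Finset.card_eq_of_bijective (fun i h => ⟨i, h.trans X.hBL⟩)
        (fun a ha => ⟨a.val, (Finset.mem_filter.mp ha).2, rfl⟩)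
        (fun i h => Finset.mem_filter.mpr ⟨Finset.mem_univ _, h⟩)
        (fun i j hi hj hij => by simpa using congrArg Fin.val hij)
  -- the transversal set U
  have hRcompl : X.m - R.card ≤ ((Finset.univ : Finset (Fin k)) \ insert b R).card := by
    rw [Finset.card_sdiff_of_subset (Finset.subset_univ _), Finset.card_insert_of_notMem hb]
    have h1 : (Finset.univ : Finset (Fin k)).card = k := by simp
    have := X.hkm
    omega
  obtain ⟨Rp, hRpsub, hRpcard⟩ := Finset.exists_subset_card_eq hRcompl
  have hRpns : ∀ i ∈ Rp, i ∉ insert b R := fun i hi =>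
    (Finset.mem_sdiff.mp (hRpsub hi)).2
  set v0 : Fin n := ⟨0, X.npos⟩
  set U : Finset (Fin k × Fin n) :=
    R.image (fun i => (i, g i)) ∪ Rp.image (fun i => (i, v0)) with hU
  have hinj1 : Function.Injective (fun i : Fin k => (i, g i)) := by
    intro x y h
    exact congrArg Prod.fst h
  have hinj2 : Function.Injective (fun i : Fin k => (i, v0)) := by
    intro x y h
    exact congrArg Prod.fst h
  have hUdisj : Disjoint (R.image (fun i => (i, g i))) (Rp.image (fun i => (i, v0))) := by
    rw [Finset.disjoint_left]
    rintro u hu hu'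
    obtain ⟨x, hx, rfl⟩ := Finset.mem_image.mp hu
    obtain ⟨y, hy, hyeq⟩ := Finset.mem_image.mp hu'
    have hxy : y = x := congrArg Prod.fst hyeq
    subst hxy
    exact hRpns y hy (Finset.mem_insert_of_mem hx)
  have hUcard : U.card = X.m := by
    rw [hU, Finset.card_union_of_disjoint hUdisj, Finset.card_image_of_injective _ hinj1,
      Finset.card_image_of_injective _ hinj2, hRpcard]
    omega
  have hUfst : ∀ u ∈ U, u.1 ∈ R ∪ Rp := by
    intro u hu
    rcases Finset.mem_union.mp hu with h | h
    · obtain ⟨x, hx, rfl⟩ := Finset.mem_image.mp h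
      exact Finset.mem_union_left _ hx
    · obtain ⟨x, hx, rfl⟩ := Finset.mem_image.mp h
      exact Finset.mem_union_right _ hx
  have htrans : ∀ u ∈ U, ∀ v ∈ U, u.1 = v.1 → u = v := by
    intro u hu v hv huv
    rcases Finset.mem_union.mp hu with h | h <;> rcases Finset.mem_union.mp hv with h' | h'
    · obtain ⟨x, hx, rfl⟩ := Finset.mem_image.mp h
      obtain ⟨y, hy, rfl⟩ := Finset.mem_image.mp h'
      simp only at huv
      subst huv; rfl
    · obtain ⟨x, hx, rfl⟩ := Finset.mem_image.mp h
      obtain ⟨y, hy, rfl⟩ := Finset.mem_image.mp h'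
      simp only at huv
      subst huv
      exact absurd (Finset.mem_insert_of_mem hx) (hRpns _ hy)
    · obtain ⟨x, hx, rfl⟩ := Finset.mem_image.mp h
      obtain ⟨y, hy, rfl⟩ := Finset.mem_image.mp h'
      simp only at huv
      subst huv
      exact absurd (Finset.mem_insert_of_mem hy) (hRpns _ hx)
    · obtain ⟨x, hx, rfl⟩ := Finset.mem_image.mp h
      obtain ⟨y, hy, rfl⟩ := Finset.mem_image.mp h'
      simp only at huv
      subst huv; rfl
  have hnotb : ∀ u ∈ U, u.1 ≠ b := by
    intro u hu
    rcases Finset.mem_union.mp (hUfst u hu) with h | h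
    · intro he; exact hb (he ▸ h)
    · intro he; exact hRpns _ h (he ▸ Finset.mem_insert_self b R)
  obtain ⟨a, hadjU, hconsU⟩ := X.hExt U hUcard htrans σt hBtot b hnotb
  have hconsτ : ConsistentWith X.τ b a.val := by
    intro j
    cases hτ : X.τ (b, j) with
    | none => exact Or.inl rfl
    | some bb =>
      right
      have hjA : j ∈ A := Finset.mem_filter.mpr ⟨Finset.mem_univ _, by rw [hτ]; simp⟩
      have hσ : σt (b, j) = some bb := by
        simp only [hσt, if_pos rfl, if_pos hjA]
        exact hτ
      rcases hconsU j with h | h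
      · rw [hσ] at h; exact absurd h (by simp)
      · rw [hσ] at h
        exact h
  refine ⟨a, fun i hi => hadjU (i, g i) (Finset.mem_union_left _ (Finset.mem_image_of_mem _ hi)),
    hconsτ, ?_⟩
  intro j hj
  have hjA : j ∉ A := by
    intro hjA
    exact (Finset.mem_filter.mp hjA).2 (hD j hj)
  have hσ : σt (b, j) = some (vals j) := by
    simp only [hσt, if_pos rfl, if_neg hjA, if_pos hj]
  rcases hconsU j with h | h
  · rw [hσ] at h; exact absurd h (by simp)
  · rw [hσ] at h
    exact (Option.some_inj.mp h).symm

/-- Nonempty `Hmem` for small `R`. -/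
lemma Ctx.exists_clique (X : Ctx k n L) :
    ∀ (c : ℕ) (R : Finset (Fin k)), R.card = c → c ≤ X.m →
    ∃ g : Fin k → Fin n, (∀ i ∈ R, ∀ j ∈ R, i ≠ j → X.G.Adj (i, g i) (j, g j)) ∧
      ∀ i ∈ R, ConsistentWith X.τ i (g i).val := by
  intro c
  induction c with
  | zero =>
    intro R hR _
    rw [Finset.card_eq_zero] at hR
    subst hR
    exact ⟨fun _ => ⟨0, X.npos⟩, by simp, by simp⟩
  | succ c ih =>
    intro R hR hc
    have hne : R.Nonempty := Finset.card_pos.mp (by omega)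
    obtain ⟨i, hi⟩ := hne
    have hcard' : (R.erase i).card = c := by rw [Finset.card_erase_of_mem hi, hR]; omega
    obtain ⟨g', hadj', hcons'⟩ := ih (R.erase i) hcard' (by omega)
    obtain ⟨a, ha1, ha2, _⟩ := X.extend (R.erase i) (by rw [hcard']; omega) i
      (Finset.notMem_erase i R)
      g' hadj' hcons' ∅ (by simp) (by simpa using X.htt1) (fun _ => false)
    refine ⟨Function.update g' i a, ?_, ?_⟩
    · intro i₁ h₁ i₂ h₂ hne'
      by_cases e₁ : i₁ = i <;> by_cases e₂ : i₂ = i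
      · exact absurd (e₁.trans e₂.symm) hne'
      · subst e₁
        rw [Function.update_self, Function.update_of_ne e₂]
        exact ha1 i₂ (Finset.mem_erase.mpr ⟨e₂, h₂⟩)
      · subst e₂
        rw [Function.update_self, Function.update_of_ne e₁]
        exact (ha1 i₁ (Finset.mem_erase.mpr ⟨e₁, h₁⟩)).symm
      · rw [Function.update_of_ne e₁, Function.update_of_ne e₂]
        exact hadj' i₁ (Finset.mem_erase.mpr ⟨e₁, h₁⟩) i₂ (Finset.mem_erase.mpr ⟨e₂, h₂⟩) hne'
    · intro i' hi'
      by_cases e : i' = i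
      · subst e
        rw [Function.update_self]
        exact ha2
      · rw [Function.update_of_ne e]
        exact hcons' i' (Finset.mem_erase.mpr ⟨e, hi'⟩)

lemma Ctx.Hmem_nonempty (X : Ctx k n L) (R : Finset (Fin k)) (hR : R.card ≤ X.m) :
    ∃ η, X.Hmem R η := by
  obtain ⟨g, hadj, hcons⟩ := X.exists_clique R.card R rfl hR
  refine ⟨fun v => if v.1 ∈ R then (g v.1).val.testBit v.2.val else (X.τ v).getD false,
    ?_, g, hadj, ?_⟩
  · rintro ⟨i, j⟩ b hτ
    by_cases h : i ∈ R
    · simp only [if_pos h]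
      rcases hcons i h j with h0 | h0
      · rw [hτ] at h0; exact absurd h0 (by simp)
      · rw [hτ] at h0
        exact (Option.some_inj.mp h0).symm
    · simp only [if_neg h, hτ, Option.getD_some]
  · intro i hi jj
    simp only [if_pos hi]

lemma Ctx.forced_axiom (X : Ctx k n L) (ρ : Restriction (Fin k × Fin L))
    (hρτ : ∀ v (bb : Bool), ρ v = some bb → X.τ v = some bb)
    (C : Clause (Fin k × Fin L)) (hC : C ∈ restrictCnf ρ (BinClique L X.G)) :
    X.Forced 2 C := by
  obtain ⟨C₀, hC₀, hrc⟩ := hC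
  obtain ⟨i, j, a, b, hij, hnadj, rfl⟩ := hC₀
  rw [restrictClause] at hrc
  split_ifs at hrc with hsat
  case _ =>
    have hCeq : C = (blockLits k L i a.val ∪ blockLits k L j b.val).filter
        (fun l => ρ l.1 = none) := (Option.some_inj.mp hrc).symm
    refine ⟨{i, j}, ?_, ?_⟩
    · exact (Finset.card_insert_le _ _).trans (by simp)
    · intro η hη
      obtain ⟨hag, g, hadjg, hbits⟩ := hη
      have hiR : i ∈ ({i, j} : Finset (Fin k)) := by simp
      have hjR : j ∈ ({i, j} : Finset (Fin k)) := by simp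
      have hadjij : X.G.Adj (i, g i) (j, g j) := hadjg i hiR j hjR hij
      have key : ∀ (i' : Fin k) (a' : Fin n), i' ∈ ({i, j} : Finset (Fin k)) → g i' ≠ a' →
          blockLits k L i' a'.val ⊆ blockLits k L i a.val ∪ blockLits k L j b.val →
          TSat η C := by
        intro i' a' hi' hne hsub
        obtain ⟨j₀, hj₀⟩ := exists_testBit_ne X.hn (g i') a' hne
        have hηv : η (i', j₀) = (g i').val.testBit j₀.val := hbits i' hi' j₀
        have hlit : (((i', j₀), !(a'.val.testBit j₀.val)) : Lit (Fin k × Fin L))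
            ∈ blockLits k L i' a'.val := Finset.mem_image.mpr ⟨j₀, Finset.mem_univ _, rfl⟩
        have hsatlit : η (i', j₀) = !(a'.val.testBit j₀.val) := by
          rw [hηv]
          cases h1 : (g i').val.testBit j₀.val <;> cases h2 : a'.val.testBit j₀.val <;>
            simp_all
        have hρnone : ρ (i', j₀) = none := by
          cases hρ : ρ (i', j₀) with
          | none => rfl
          | some bb =>
            exfalso
            apply hsat
            refine ⟨((i', j₀), !(a'.val.testBit j₀.val)), hsub hlit, ?_⟩
            have := hag (i', j₀) bb (hρτ _ _ hρ)
            rw [hρ]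
            rw [← this, hsatlit]
        refine ⟨((i', j₀), !(a'.val.testBit j₀.val)), ?_, hsatlit⟩
        rw [hCeq]
        exact Finset.mem_filter.mpr ⟨hsub hlit, hρnone⟩
      have hor : g i ≠ a ∨ g j ≠ b := by
        by_contra h
        push_neg at h
        obtain ⟨h1, h2⟩ := h
        rw [h1, h2] at hadjij
        exact hnadj hadjij
      rcases hor with h | h
      · exact key i a hiR h Finset.subset_union_left
      · exact key j b hjR h Finset.subset_union_right

lemma Ctx.exists_crit (X : Ctx k n L) (F : Cnf (Fin k × Fin L))
    (π : List (Clause (Fin k × Fin L))) (hπ : IsResRefutation F π)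
    (hax : ∀ C ∈ F, X.Forced 2 C) (t : ℕ) (ht : 2 ≤ t)
    (hnf : ¬ X.Forced (2 * t) (∅ : Clause (Fin k × Fin L))) :
    ∃ C ∈ π, ¬ X.Forced t C ∧ X.Forced (2 * t) C := by
  classical
  obtain ⟨hstep, hlast⟩ := hπ
  have hmem0 : (∅ : Clause (Fin k × Fin L)) ∈ π := by
    have hne : π ≠ [] := by
      intro h
      rw [h] at hlast
      simp at hlast
    have := List.getLast?_eq_getLast hne
    rw [this] at hlast
    rw [← Option.some_inj.mp hlast]
    exact List.getLast_mem hne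
  obtain ⟨i0', hi0'lt, hi0'⟩ := List.mem_iff_getElem.mp hmem0
  have hbad : ∃ i : ℕ, ∃ h : i < π.length, ¬ X.Forced t π[i] := by
    refine ⟨i0', hi0'lt, ?_⟩
    rw [hi0']
    intro hf
    exact hnf (X.forced_mono (by omega) hf)
  set Q : ℕ → Prop := fun i => ∃ h : i < π.length, ¬ X.Forced t π[i] with hQ
  have hbad' : ∃ i, Q i := hbad
  set i0 : ℕ := Nat.find hbad' with hi0def
  obtain ⟨hi0lt, hi0⟩ := Nat.find_spec hbad'
  have hmin : ∀ C ∈ π.take i0, X.Forced t C := by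
    intro C hC
    obtain ⟨j, hj, hEq⟩ := List.mem_iff_getElem.mp hC
    have hjlen : j < π.length := lt_of_lt_of_le hj (by simp)
    have hji0 : j < i0 := lt_of_lt_of_le hj (by simp)
    rw [← hEq, List.getElem_take]
    by_contra hcon
    exact Nat.find_min hbad' hji0 ⟨hjlen, hcon⟩
  have hstep0 := hstep ⟨i0, hi0lt⟩
  simp only [List.get_eq_getElem] at hstep0
  rcases hstep0 with hax' | ⟨C₁, hC₁, C₂, hC₂, x, hx1, hx2, hCeq⟩ | ⟨C', hC', l, hCeq⟩
  · exact absurd (X.forced_mono (by omega) (hax _ hax')) hi0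
  · refine ⟨π[i0], List.getElem_mem hi0lt, hi0, ?_⟩
    rw [hCeq]
    exact X.forced_mono (by omega)
      (X.forced_res hx1 hx2 (hmin C₁ hC₁) (hmin C₂ hC₂))
  · exfalso
    apply hi0
    rw [hCeq]
    exact X.forced_weak (hmin C' hC') l

lemma Ctx.crit_wide (X : Ctx k n L) (t : ℕ) (ht : 2 ≤ t) (h2t : 2 * t ≤ X.m)
    (C : Clause (Fin k × Fin L)) (hnf : ¬ X.Forced t C) (hf : X.Forced (2 * t) C) :
    ∃ R : Finset (Fin k), t + 1 ≤ R.card ∧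
      (∀ i ∈ R, X.tt ≤ ((Finset.univ : Finset (Fin L)).filter
        (fun jj => X.τ (i, jj) = none ∧
          (((i, jj), true) ∈ C ∨ ((i, jj), false) ∈ C))).card) ∧
      (∃ η, X.Hmem ∅ η ∧ ¬ TSat η C) := by
  classical
  have hP : ∃ r, X.Forced r C := ⟨2 * t, hf⟩
  obtain ⟨R, hRcard, hRwit⟩ := Nat.find_spec hP
  have hr0t : t < Nat.find hP := by
    rcases lt_or_ge t (Nat.find hP) with h | h
    · exact h
    · exact absurd (X.forced_mono h (Nat.find_spec hP)) hnf
  have hr02t : Nat.find hP ≤ 2 * t := Nat.find_le (h := hP) hf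
  have hRcard' : R.card = Nat.find hP := by
    refine le_antisymm hRcard ?_
    by_contra h
    push_neg at h
    have h2 := Nat.find_le (h := hP) (⟨R, le_rfl, hRwit⟩ : X.Forced R.card C)
    omega
  have hη₀ : ∃ η, X.Hmem ∅ η ∧ ¬ TSat η C := by
    have h0 : ¬ X.Forced 0 C := by
      intro hf0
      have h2 := Nat.find_le (h := hP) hf0
      omega
    rw [Ctx.Forced] at h0
    push_neg at h0
    obtain ⟨η, hη, hns⟩ := h0 ∅ (by simp)
    exact ⟨η, hη, hns⟩
  refine ⟨R, by omega, ?_, hη₀⟩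
  intro i hiR
  by_contra hsmall
  push_neg at hsmall
  -- R.erase i is not a witness
  have hnwit : ¬ ∀ η, X.Hmem (R.erase i) η → TSat η C := by
    intro hw
    have hPr : X.Forced (Nat.find hP - 1) C :=
      ⟨R.erase i, by rw [Finset.card_erase_of_mem hiR, hRcard'], hw⟩
    have h2 := Nat.find_le (h := hP) hPr
    omega
  push_neg at hnwit
  obtain ⟨η₁, hη₁, hη₁ns⟩ := hnwit
  obtain ⟨hag₁, g₁, hadj₁, hbits₁⟩ := hη₁
  have hcons₁ : ∀ i' ∈ R.erase i, ConsistentWith X.τ i' (g₁ i').val := by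
    intro i' hi' jj
    cases hτ : X.τ (i', jj) with
    | none => exact Or.inl rfl
    | some bb =>
      right
      rw [← hbits₁ i' hi' jj]
      rw [hag₁ (i', jj) bb hτ]
  set D : Finset (Fin L) := Finset.univ.filter
    (fun jj => X.τ (i, jj) = none ∧ (((i, jj), true) ∈ C ∨ ((i, jj), false) ∈ C)) with hD
  set vals : Fin L → Bool := fun jj => if ((i, jj), true) ∈ C then false else true with hvals
  have hDc : D.card + 1 ≤ X.tt := by
    have : D.card < X.tt := hsmall
    omega
  have hRe : (R.erase i).card ≤ X.m := by
    rw [Finset.card_erase_of_mem hiR, hRcard']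
    omega
  obtain ⟨a, hadja, hconsa, hbitsa⟩ := X.extend (R.erase i)
    hRe i (Finset.notMem_erase i R)
    g₁ hadj₁ hcons₁ D (fun j hj => (Finset.mem_filter.mp hj).2.1) hDc vals
  set η' : Fin k × Fin L → Bool :=
    fun v => if v.1 = i then a.val.testBit v.2.val else η₁ v with hη'
  -- η₁ falsifies no-tautology: for each var at most one polarity useful
  have hfal : ∀ l ∈ C, ¬ (η₁ l.1 = l.2) := by
    intro l hl hs
    exact hη₁ns ⟨l, hl, hs⟩
  have hη'mem : X.Hmem R η' := by
    refine ⟨?_, Function.update g₁ i a, ?_, ?_⟩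
    · rintro ⟨i', jj⟩ bb hτ
      by_cases h : i' = i
      · subst h
        simp only [hη', if_pos rfl]
        rcases hconsa jj with h0 | h0
        · rw [hτ] at h0; exact absurd h0 (by simp)
        · rw [hτ] at h0
          exact (Option.some_inj.mp h0).symm
      · simp only [hη', if_neg h]
        exact hag₁ _ _ hτ
    · intro i₁ h₁ i₂ h₂ hne'
      by_cases e₁ : i₁ = i <;> by_cases e₂ : i₂ = i
      · exact absurd (e₁.trans e₂.symm) hne'
      · subst e₁
        rw [Function.update_self, Function.update_of_ne e₂]
        exact hadja i₂ (Finset.mem_erase.mpr ⟨e₂, h₂⟩)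
      · subst e₂
        rw [Function.update_self, Function.update_of_ne e₁]
        exact (hadja i₁ (Finset.mem_erase.mpr ⟨e₁, h₁⟩)).symm
      · rw [Function.update_of_ne e₁, Function.update_of_ne e₂]
        exact hadj₁ i₁ (Finset.mem_erase.mpr ⟨e₁, h₁⟩) i₂ (Finset.mem_erase.mpr ⟨e₂, h₂⟩) hne'
    · intro i' hi' jj
      by_cases e : i' = i
      · subst e
        rw [Function.update_self]
        simp only [hη', if_pos rfl]
      · rw [Function.update_of_ne e]
        simp only [hη', if_neg e]
        exact hbits₁ i' (Finset.mem_erase.mpr ⟨e, hi'⟩) jj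
  have hη'ns : ¬ TSat η' C := by
    rintro ⟨⟨⟨i', jj⟩, bb⟩, hl, hsatp⟩
    have hsat : η' (i', jj) = bb := hsatp
    by_cases h : i' = i
    · subst h
      by_cases hτf : X.τ (i', jj) = none
      · have hjD : jj ∈ D := Finset.mem_filter.mpr ⟨Finset.mem_univ _, hτf, by
          cases bb
          · exact Or.inr hl
          · exact Or.inl hl⟩
        have hbit : a.val.testBit jj.val = vals jj := hbitsa jj hjD
        have hsat' : a.val.testBit jj.val = bb := by
          simpa only [hη', if_pos rfl] using hsat
        by_cases hcT : ((i', jj), true) ∈ C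
        · -- vals jj = false, so bb = false, but then both polarities ∈ C
          have hvf : vals jj = false := by simp only [hvals, if_pos hcT]
          have hbb : bb = false := by rw [← hsat', hbit, hvf]
          subst hbb
          cases hb : η₁ (i', jj)
          · exact hfal _ hl hb
          · exact hfal _ hcT hb
        · have hvf : vals jj = true := by simp only [hvals, if_neg hcT]
          have hbb : bb = true := by rw [← hsat', hbit, hvf]
          subst hbb
          exact hcT hl
      · obtain ⟨bb', hbb'⟩ := Option.ne_none_iff_exists'.mp hτf
        have e1 : a.val.testBit jj.val = bb' := by
          rcases hconsa jj with h0 | h0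
          · rw [hbb'] at h0; exact absurd h0 (by simp)
          · rw [hbb'] at h0
            exact (Option.some_inj.mp h0).symm
        have e2 : η₁ (i', jj) = bb' := hag₁ _ _ hbb'
        apply hfal _ hl
        show η₁ (i', jj) = bb
        rw [e2, ← e1, ← hsat]
        simp only [hη', if_pos rfl]
    · apply hfal _ hl
      show η₁ (i', jj) = bb
      rw [← hsat]
      simp only [hη', if_neg h]
  exact hη'ns (hRwit η' hη'mem)

end BaseCaseAux

/-- **Base case.**  For `α = 1/(16(1+2ε))`, `β = 3/4`, `δ = 1/(2·96²)` and all
sufficiently large powers of two `n = 2^L`: if `2·16·96² < k ≤ log n` and `G` is a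
`k`-partite graph on `[k] × [n]` whose `α`-transversal sets are all `β`-extendable and
which has no `k`-clique, then for every `1`-restriction `ρ`, every Resolution refutation
of `Bin-Clique_k^n(G)↾ρ` has size at least `n^(δ(k-1)/16)`. -/
theorem binclique_res_base_case (ε : ℝ) (hε0 : 0 < ε) (hε1 : ε < 1) :
    ∃ N : ℕ, ∀ L n k : ℕ, n = 2 ^ L → N ≤ n → 2 * 16 * 96 ^ 2 < k → k ≤ L →
      ∀ G : SimpleGraph (Fin k × Fin n), KPartite G →
        (∀ U : Finset (Fin k × Fin n),
          AlphaTransversal (1 / (16 * (1 + 2 * ε))) U → BExtendable (3 / 4) L G U) →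
        G.CliqueFree k →
        ∀ ρ : Restriction (Fin k × Fin L), IsSRestriction 1 k L ρ →
          ∀ π : List (Clause (Fin k × Fin L)),
            IsResRefutation (restrictCnf ρ (BinClique L G)) π →
            (n : ℝ) ^ (deltaC * ((k : ℝ) - 1) / 16) ≤ (π.length : ℝ) := by
  classical
  refine ⟨1, ?_⟩
  intro L n k hn hNn hk hkL G hpart hext hcf ρ hρ π hπ
  by_contra hlt
  push_neg at hlt
  -- basic numeric facts
  have hk' : 294912 < k := by norm_num at hk; omega
  have hL : 294913 ≤ L := by omega
  have hn2 : (n : ℝ) = 2 ^ L := by rw [hn]; push_cast; ring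
  -- restriction counts
  have hρcnt : ∀ i : Fin k, ((Finset.univ : Finset (Fin L)).filter
      fun j => ρ (i, j) ≠ none).card = L / 4 := by
    intro i
    have h := hρ i
    norm_num [IsSRestriction] at h
    convert h using 2
  have hfree : ∀ i : Fin k, ((Finset.univ : Finset (Fin L)).filter
      fun j => ρ (i, j) = none).card = L - L / 4 := by
    intro i
    have h1 := Finset.card_filter_add_card_filter_not
      (s := (Finset.univ : Finset (Fin L))) (p := fun j => ρ (i, j) = none)
    have h2 := hρcnt i
    rw [Finset.card_univ, Fintype.card_fin] at h1
    have h3 : ((Finset.univ : Finset (Fin L)).filter fun j => ¬ ρ (i, j) = none)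
        = ((Finset.univ : Finset (Fin L)).filter fun j => ρ (i, j) ≠ none) := by
      rfl
    rw [h3, h2] at h1
    omega
  set f : ℕ := L - L / 4 with hfdef
  set q : ℕ := f / 4 with hqdef
  set B : ℕ := 3 * L / 4 with hBdef
  have hBeq : ⌊(3/4 : ℝ) * (L : ℝ)⌋₊ = B := by
    rw [show (3/4 : ℝ) * (L : ℝ) = ((3 * L : ℕ) : ℝ) / ((4 : ℕ) : ℝ) by push_cast; ring,
      Nat.floor_div_natCast, Nat.floor_natCast]
  set m : ℕ := ⌊(1 / (16 * (1 + 2 * ε))) * (k : ℝ)⌋₊ with hmdef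
  have hden0 : (0 : ℝ) < 16 * (1 + 2 * ε) := by nlinarith
  have hm48 : k / 48 ≤ m := by
    have h1 : (1 / 48 : ℝ) ≤ 1 / (16 * (1 + 2 * ε)) :=
      one_div_le_one_div_of_le hden0 (by nlinarith)
    have h48 : ((k : ℕ) : ℝ) / ((48 : ℕ) : ℝ) ≤ (1 / (16 * (1 + 2 * ε))) * (k : ℝ) := by
      calc ((k : ℕ) : ℝ) / ((48 : ℕ) : ℝ) = (1 / 48 : ℝ) * (k : ℝ) := by push_cast; ring
        _ ≤ (1 / (16 * (1 + 2 * ε))) * (k : ℝ) :=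
          mul_le_mul_of_nonneg_right h1 (Nat.cast_nonneg k)
    calc k / 48 = ⌊((k : ℕ) : ℝ) / ((48 : ℕ) : ℝ)⌋₊ := by
          rw [Nat.floor_div_natCast, Nat.floor_natCast]
      _ ≤ m := Nat.floor_le_floor h48
  have hm16 : m ≤ k / 16 := by
    have h1 : (1 / (16 * (1 + 2 * ε)) : ℝ) ≤ 1 / 16 :=
      one_div_le_one_div_of_le (by norm_num) (by nlinarith)
    have h16 : (1 / (16 * (1 + 2 * ε))) * (k : ℝ) ≤ ((k : ℕ) : ℝ) / ((16 : ℕ) : ℝ) := by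
      calc (1 / (16 * (1 + 2 * ε))) * (k : ℝ) ≤ (1 / 16 : ℝ) * (k : ℝ) :=
            mul_le_mul_of_nonneg_right h1 (Nat.cast_nonneg k)
        _ = ((k : ℕ) : ℝ) / ((16 : ℕ) : ℝ) := by push_cast; ring
    calc m ≤ ⌊((k : ℕ) : ℝ) / ((16 : ℕ) : ℝ)⌋₊ := Nat.floor_le_floor h16
      _ = k / 16 := by rw [Nat.floor_div_natCast, Nat.floor_natCast]
  set t : ℕ := m / 4 with htdef
  set acnt : ℕ := L / 4 + q with hacntdef
  set tt : ℕ := B - acnt with httdef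
  set W : ℕ := (t + 1) * (tt - 3) with hWdef
  have hnum1 : acnt + tt = B := by omega
  have hnum2 : 1 ≤ tt := by omega
  have hnum3 : B < L := by omega
  have hnum4 : m + 1 ≤ k := by omega
  have ht2 : 2 ≤ t := by omega
  have h2tm : 2 * t ≤ m := by omega
  have hnum7 : 4 * q ≤ f ∧ f - 4 * q ≤ 3 := by omega
  have hnum8 : L ≤ 4 * (tt - 3) := by omega
  have hnum9 : k ≤ 192 * (t + 1) := by omega
  have hq0 : 0 < q := by omega
  -- the position machinery
  set freeS : Fin k → Finset (Fin L) := fun i =>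
    Finset.univ.filter fun j => ρ (i, j) = none with hfreeSdef
  have hfcard : ∀ i, (freeS i).card = f := fun i => hfree i
  have hpos4 : ∀ (c : Fin q) (r : Fin 4), 4 * c.val + r.val < f := by
    intro c r
    have hc := c.isLt
    have hr := r.isLt
    omega
  set pos : Fin k → Fin q → Fin 4 → Fin L := fun i c r =>
    (((freeS i).orderIsoOfFin (hfcard i)) ⟨4 * c.val + r.val, hpos4 c r⟩ : Fin L) with hposdef
  have hposfree : ∀ i c r, ρ (i, pos i c r) = none := by
    intro i c r
    have hmem : pos i c r ∈ Finset.univ.filter (fun j => ρ (i, j) = none) :=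
      (((freeS i).orderIsoOfFin (hfcard i)) ⟨4 * c.val + r.val, hpos4 c r⟩).2
    exact (Finset.mem_filter.mp hmem).2
  have hposinj : ∀ i (c : Fin q) (r : Fin 4) (c' : Fin q) (r' : Fin 4),
      pos i c r = pos i c' r' → c = c' ∧ r = r' := by
    intro i c r c' r' h
    have h2 := ((freeS i).orderIsoOfFin (hfcard i)).injective (Subtype.ext h)
    have h3 : 4 * c.val + r.val = 4 * c'.val + r'.val := congrArg Fin.val h2
    have hc := c.isLt
    have hc' := c'.isLt
    have hr := r.isLt
    have hr' := r'.isLt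
    exact ⟨Fin.ext (by omega), Fin.ext (by omega)⟩
  -- the sample space and random restrictions
  set σω : ((Fin k × Fin q) → Fin 4 × Bool) → Restriction (Fin k × Fin L) := fun ω v =>
    if h : ∃ c : Fin q, pos v.1 c (ω (v.1, c)).1 = v.2
    then some ((ω (v.1, h.choose)).2) else none with hσωdef
  have hσsome : ∀ ω i (c : Fin q),
      σω ω (i, pos i c (ω (i, c)).1) = some ((ω (i, c)).2) := by
    intro ω i c
    have hex : ∃ c' : Fin q, pos i c' (ω (i, c')).1 = pos i c (ω (i, c)).1 := ⟨c, rfl⟩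
    simp only [hσωdef]
    rw [dif_pos hex]
    have hcc := (hposinj i _ _ _ _ hex.choose_spec).1
    rw [hcc]
  have hσnone : ∀ ω i (j : Fin L), (∀ c : Fin q, pos i c (ω (i, c)).1 ≠ j) →
      σω ω (i, j) = none := by
    intro ω i j h
    simp only [hσωdef]
    rw [dif_neg]
    push_neg
    exact h
  set τω : ((Fin k × Fin q) → Fin 4 × Bool) → Restriction (Fin k × Fin L) := fun ω v =>
    (ρ v).elim (σω ω v) some with hτωdef
  have hτsome : ∀ ω v (b : Bool), ρ v = some b → τω ω v = some b := by
    intro ω v b h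
    simp only [hτωdef, h, Option.elim]
  have hτnone : ∀ ω v, ρ v = none → τω ω v = σω ω v := by
    intro ω v h
    simp only [hτωdef, h, Option.elim]
  have hτnone' : ∀ ω v, τω ω v = none → ρ v = none := by
    intro ω v h
    cases hρv : ρ v with
    | none => rfl
    | some b => rw [hτsome ω v b hρv] at h; exact absurd h (by simp)
  have hσset : ∀ ω i, ((Finset.univ : Finset (Fin L)).filter fun j => σω ω (i, j) ≠ none)
      = Finset.univ.image (fun c : Fin q => pos i c (ω (i, c)).1) := by
    intro ω i
    ext j
    simp only [Finset.mem_filter, Finset.mem_univ, true_and, Finset.mem_image]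
    constructor
    · intro hne
      by_contra hno
      push_neg at hno
      exact hne (hσnone ω i j hno)
    · rintro ⟨c, -, rfl⟩
      rw [hσsome ω i c]
      simp
  have hσcnt : ∀ ω i, ((Finset.univ : Finset (Fin L)).filter
      fun j => σω ω (i, j) ≠ none).card = q := by
    intro ω i
    rw [hσset ω i, Finset.card_image_of_injective _
      (fun c c' h => (hposinj i _ _ _ _ h).1), Finset.card_univ, Fintype.card_fin]
  have hτcnt : ∀ ω (i : Fin k), ((Finset.univ : Finset (Fin L)).filter
      fun j => τω ω (i, j) ≠ none).card = acnt := by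
    intro ω i
    have hsetEq : ((Finset.univ : Finset (Fin L)).filter fun j => τω ω (i, j) ≠ none)
        = ((Finset.univ : Finset (Fin L)).filter fun j => ρ (i, j) ≠ none)
          ∪ ((Finset.univ : Finset (Fin L)).filter fun j => σω ω (i, j) ≠ none) := by
      ext j
      simp only [Finset.mem_filter, Finset.mem_univ, true_and, Finset.mem_union]
      cases hρv : ρ (i, j) with
      | some b =>
        rw [hτsome ω (i, j) b hρv]
        simp
      | none =>
        rw [hτnone ω (i, j) hρv]
        simp
    rw [hsetEq, Finset.card_union_of_disjoint, hρcnt i, hσcnt ω i]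
    rw [Finset.disjoint_left]
    intro j hj1 hj2
    rw [hσset ω i] at hj2
    obtain ⟨c, -, hc⟩ := Finset.mem_image.mp hj2
    have := hposfree i c (ω (i, c)).1
    rw [hc] at this
    exact (Finset.mem_filter.mp hj1).2 this
  -- covered variables of a clause
  set VCov : Clause (Fin k × Fin L) → Finset (Fin k × Fin L) := fun C =>
    Finset.univ.filter (fun v => (∃ c r, pos v.1 c r = v.2) ∧
      ((v, true) ∈ C ∨ (v, false) ∈ C)) with hVCovdef
  -- the counting lemma
  have hcount : ∀ C : Clause (Fin k × Fin L), W ≤ (VCov C).card →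
      (((Finset.univ : Finset ((Fin k × Fin q) → Fin 4 × Bool)).filter
        (fun ω => ∀ v ∈ VCov C, ∀ bb : Bool, (v, bb) ∈ C → σω ω v ≠ some bb)).card : ℝ)
      ≤ (8 : ℝ) ^ (k * q) * (7 / 8) ^ W := by
    intro C hWC
    set Forb : (Fin k × Fin q) → Finset (Fin 4 × Bool) := fun x =>
      Finset.univ.filter (fun p => ((x.1, pos x.1 x.2 p.1), p.2) ∈ C) with hForbdef
    have hForb8 : ∀ x, (Forb x).card ≤ 8 := by
      intro x
      calc (Forb x).card ≤ (Finset.univ : Finset (Fin 4 × Bool)).card :=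
            Finset.card_filter_le _ _
        _ = 8 := by simp
    have hsub : ((Finset.univ : Finset ((Fin k × Fin q) → Fin 4 × Bool)).filter
        (fun ω => ∀ v ∈ VCov C, ∀ bb : Bool, (v, bb) ∈ C → σω ω v ≠ some bb))
        ⊆ Fintype.piFinset (fun x => Finset.univ \ Forb x) := by
      intro ω hω
      have hω' := (Finset.mem_filter.mp hω).2
      rw [Fintype.mem_piFinset]
      intro x
      rw [Finset.mem_sdiff]
      refine ⟨Finset.mem_univ _, ?_⟩
      intro hmem
      have hlit : ((x.1, pos x.1 x.2 (ω x).1), (ω x).2) ∈ C := (Finset.mem_filter.mp hmem).2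
      have hv : ((x.1, pos x.1 x.2 (ω x).1) : Fin k × Fin L) ∈ VCov C := by
        refine Finset.mem_filter.mpr ⟨Finset.mem_univ _, ⟨x.2, (ω x).1, rfl⟩, ?_⟩
        cases hb : (ω x).2
        · right; rw [← hb]; exact hlit
        · left; rw [← hb]; exact hlit
      have hσ : σω ω (x.1, pos x.1 x.2 (ω x).1) = some ((ω x).2) := hσsome ω x.1 x.2
      exact hω' _ hv (ω x).2 hlit hσ
    have hcard1 : (((Finset.univ : Finset ((Fin k × Fin q) → Fin 4 × Bool)).filter
        (fun ω => ∀ v ∈ VCov C, ∀ bb : Bool, (v, bb) ∈ C → σω ω v ≠ some bb)).card : ℝ)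
        ≤ ∏ x : Fin k × Fin q, ((8 - (Forb x).card : ℕ) : ℝ) := by
      have h1 := Finset.card_le_card hsub
      rw [Fintype.card_piFinset] at h1
      have h2 : ∀ x : Fin k × Fin q, ((Finset.univ : Finset (Fin 4 × Bool)) \ Forb x).card
          = 8 - (Forb x).card := by
        intro x
        rw [Finset.card_sdiff_of_subset (Finset.subset_univ _)]
        simp
      rw [Finset.prod_congr rfl (fun x _ => h2 x)] at h1
      calc (((Finset.univ : Finset ((Fin k × Fin q) → Fin 4 × Bool)).filter _).card : ℝ)
          ≤ ((∏ x : Fin k × Fin q, (8 - (Forb x).card) : ℕ) : ℝ) := Nat.cast_le.mpr h1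
        _ = ∏ x : Fin k × Fin q, ((8 - (Forb x).card : ℕ) : ℝ) := by push_cast; rfl
    -- W is at most the total number of forbidden pairs
    have hsum : W ≤ ∑ x : Fin k × Fin q, (Forb x).card := by
      set pick : Fin k × Fin L → Fin q × Fin 4 := fun v =>
        if h : ∃ c : Fin q, ∃ r : Fin 4, pos v.1 c r = v.2
        then (h.choose, h.choose_spec.choose) else (⟨0, hq0⟩, 0) with hpickdef
      have hpick : ∀ v : Fin k × Fin L, (∃ c : Fin q, ∃ r : Fin 4, pos v.1 c r = v.2) →
          pos v.1 (pick v).1 (pick v).2 = v.2 := by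
        intro v h
        simp only [hpickdef, dif_pos h]
        exact h.choose_spec.choose_spec
      set FF : Fin k × Fin L → ((_ : Fin k × Fin q) × (Fin 4 × Bool)) := fun v =>
        ⟨(v.1, (pick v).1), ((pick v).2, if (v, true) ∈ C then true else false)⟩ with hFFdef
      have hmaps : ∀ v ∈ VCov C, FF v ∈ (Finset.univ : Finset (Fin k × Fin q)).sigma
          (fun x => Forb x) := by
        intro v hv
        obtain ⟨-, hcov, hlits⟩ := Finset.mem_filter.mp hv
        rw [Finset.mem_sigma]
        refine ⟨Finset.mem_univ _, ?_⟩
        refine Finset.mem_filter.mpr ⟨Finset.mem_univ _, ?_⟩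
        have hpos' : pos v.1 (pick v).1 (pick v).2 = v.2 := hpick v hcov
        show ((v.1, pos v.1 (pick v).1 (pick v).2), _) ∈ C
        rw [hpos']
        by_cases hT : (v, true) ∈ C
        · simp only [hFFdef, if_pos hT]; exact hT
        · rcases hlits with h | h
          · exact absurd h hT
          · simp only [hFFdef, if_neg hT]; exact h
      have hinjOn : Set.InjOn FF (VCov C : Set (Fin k × Fin L)) := by
        intro va hva vb hvb hFF2
        have hcova : ∃ c : Fin q, ∃ r : Fin 4, pos va.1 c r = va.2 :=
          (Finset.mem_filter.mp (Finset.mem_coe.mp hva)).2.1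
        have hcovb : ∃ c : Fin q, ∃ r : Fin 4, pos vb.1 c r = vb.2 :=
          (Finset.mem_filter.mp (Finset.mem_coe.mp hvb)).2.1
        have h1 : (va.1, (pick va).1) = (vb.1, (pick vb).1) := congrArg Sigma.fst hFF2
        have h1a : va.1 = vb.1 := (Prod.ext_iff.mp h1).1
        have h1b : (pick va).1 = (pick vb).1 := (Prod.ext_iff.mp h1).2
        have h2 : (((pick va).2 : Fin 4), (if (va, true) ∈ C then true else false))
            = ((pick vb).2, (if (vb, true) ∈ C then true else false)) :=
          eq_of_heq (Sigma.mk.inj_iff.mp hFF2).2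
        have h2a : (pick va).2 = (pick vb).2 := (Prod.ext_iff.mp h2).1
        have hvals : va.2 = vb.2 := by
          rw [← hpick va hcova, ← hpick vb hcovb, h1a, h1b, h2a]
        exact Prod.ext h1a hvals
      have hcardle := Finset.card_le_card_of_injOn FF hmaps hinjOn
      rw [Finset.card_sigma] at hcardle
      calc W ≤ (VCov C).card := hWC
        _ ≤ ∑ x ∈ (Finset.univ : Finset (Fin k × Fin q)), (Forb x).card := hcardle
    have hprod : ∏ x : Fin k × Fin q, ((8 - (Forb x).card : ℕ) : ℝ)
        ≤ (8 : ℝ) ^ (k * q) * (7 / 8) ^ W := by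
      calc ∏ x : Fin k × Fin q, ((8 - (Forb x).card : ℕ) : ℝ)
          ≤ ∏ x : Fin k × Fin q, ((8 : ℝ) * (7 / 8) ^ (Forb x).card) := by
            apply Finset.prod_le_prod
            · intro x _; positivity
            · intro x _
              have hc8 := hForb8 x
              set c := (Forb x).card with hc
              clear_value c
              interval_cases c <;> norm_num
        _ = (8 : ℝ) ^ (Fintype.card (Fin k × Fin q)) * (7 / 8) ^ (∑ x : Fin k × Fin q, (Forb x).card) := by
            rw [Finset.prod_mul_distrib, Finset.prod_const, Finset.prod_pow_eq_pow_sum]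
            rw [Finset.card_univ]
        _ ≤ (8 : ℝ) ^ (k * q) * (7 / 8) ^ W := by
            rw [Fintype.card_prod, Fintype.card_fin, Fintype.card_fin]
            apply mul_le_mul_of_nonneg_left _ (by positivity)
            exact pow_le_pow_of_le_one (by norm_num) (by norm_num) hsum
    exact le_trans hcard1 hprod
  -- numeric: the target bound is at most (8/7)^W
  have hWnat : 6 * (L * (k - 1)) ≤ 294912 * W := by
    have h1 : k - 1 ≤ 192 * (t + 1) := by omega
    calc 6 * (L * (k - 1)) ≤ 6 * ((4 * (tt - 3)) * (192 * (t + 1))) := by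
          exact Nat.mul_le_mul_left 6 (Nat.mul_le_mul hnum8 h1)
      _ = 4608 * ((t + 1) * (tt - 3)) := by ring
      _ ≤ 294912 * W := by
          rw [hWdef]
          exact Nat.mul_le_mul_right _ (by norm_num)
  have hWbig : (n : ℝ) ^ (deltaC * ((k : ℝ) - 1) / 16) ≤ ((8 : ℝ) / 7) ^ W := by
    have hdelta : deltaC * ((k : ℝ) - 1) / 16 = ((k : ℝ) - 1) / 294912 := by
      rw [deltaC]
      ring
    have hstep1 : (n : ℝ) ^ (deltaC * ((k : ℝ) - 1) / 16)
        = (2 : ℝ) ^ ((L : ℝ) * (((k : ℝ) - 1) / 294912)) := by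
      rw [hn2, ← Real.rpow_natCast 2 L, ← Real.rpow_mul (by norm_num), hdelta]
    have hcast : ((6 * (L * (k - 1)) : ℕ) : ℝ) ≤ ((294912 * W : ℕ) : ℝ) :=
      Nat.cast_le.mpr hWnat
    push_cast [Nat.cast_sub (show 1 ≤ k by omega)] at hcast
    have hexp : (L : ℝ) * (((k : ℝ) - 1) / 294912) ≤ (W : ℝ) / 6 := by linarith
    rw [hstep1]
    calc (2 : ℝ) ^ ((L : ℝ) * (((k : ℝ) - 1) / 294912)) ≤ (2 : ℝ) ^ ((W : ℝ) / 6) :=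
          Real.rpow_le_rpow_of_exponent_le (by norm_num) hexp
      _ ≤ ((8 : ℝ) / 7) ^ W := by
          have h1 : (2 : ℝ) ^ ((W : ℝ) / 6) = ((2 : ℝ) ^ ((1 : ℝ) / 6)) ^ (W : ℕ) := by
            rw [← Real.rpow_natCast ((2 : ℝ) ^ ((1 : ℝ) / 6)) W,
              ← Real.rpow_mul (by norm_num)]
            congr 1
            ring
          rw [h1]
          refine pow_le_pow_left₀ (by positivity) ?_ W
          have h2 : ((2 : ℝ) ^ ((1 : ℝ) / 6)) ^ (6 : ℕ) = 2 := by
            rw [← Real.rpow_natCast ((2 : ℝ) ^ ((1 : ℝ) / 6)) 6,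
              ← Real.rpow_mul (by norm_num)]
            norm_num
          refine le_of_pow_le_pow_left₀ (n := 6) (by norm_num) (by norm_num) ?_
          rw [h2]
          norm_num
  have hlenlt : (π.length : ℝ) < ((8 : ℝ) / 7) ^ W := lt_of_lt_of_le hlt hWbig
  -- a good ω exists
  have hgood : ∃ ω : (Fin k × Fin q) → Fin 4 × Bool, ∀ C ∈ π,
      ¬ (W ≤ (VCov C).card ∧ ∀ v ∈ VCov C, ∀ bb : Bool, (v, bb) ∈ C → σω ω v ≠ some bb) := by
    by_contra hall
    push_neg at hall
    set bad : Clause (Fin k × Fin L) → Finset ((Fin k × Fin q) → Fin 4 × Bool) := fun C =>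
      if W ≤ (VCov C).card then
        Finset.univ.filter (fun ω => ∀ v ∈ VCov C, ∀ bb : Bool, (v, bb) ∈ C → σω ω v ≠ some bb)
      else ∅ with hbaddef
    have hterm : ∀ C, ((bad C).card : ℝ) ≤ (8 : ℝ) ^ (k * q) * (7 / 8) ^ W := by
      intro C
      by_cases h : W ≤ (VCov C).card
      · simp only [hbaddef, if_pos h]
        exact hcount C h
      · simp only [hbaddef, if_neg h, Finset.card_empty, Nat.cast_zero]
        positivity
    have hsub : (Finset.univ : Finset ((Fin k × Fin q) → Fin 4 × Bool))
        ⊆ π.toFinset.biUnion bad := by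
      intro ω _
      obtain ⟨C, hCmem, hC1, hC2⟩ := hall ω
      refine Finset.mem_biUnion.mpr ⟨C, List.mem_toFinset.mpr hCmem, ?_⟩
      simp only [hbaddef, if_pos hC1]
      exact Finset.mem_filter.mpr ⟨Finset.mem_univ _, hC2⟩
    have hΩ : (((Finset.univ : Finset ((Fin k × Fin q) → Fin 4 × Bool))).card : ℝ)
        = (8 : ℝ) ^ (k * q) := by
      rw [Finset.card_univ, Fintype.card_fun, Fintype.card_prod, Fintype.card_prod,
        Fintype.card_fin, Fintype.card_fin, Fintype.card_fin, Fintype.card_bool]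
      push_cast
      norm_num
    have hchain : (8 : ℝ) ^ (k * q) ≤ (π.length : ℝ) * ((8 : ℝ) ^ (k * q) * (7 / 8) ^ W) := by
      calc (8 : ℝ) ^ (k * q)
          = (((Finset.univ : Finset ((Fin k × Fin q) → Fin 4 × Bool))).card : ℝ) := hΩ.symm
        _ ≤ ((π.toFinset.biUnion bad).card : ℝ) := Nat.cast_le.mpr (Finset.card_le_card hsub)
        _ ≤ ((∑ C ∈ π.toFinset, (bad C).card : ℕ) : ℝ) := by
            exact_mod_cast Finset.card_biUnion_le
        _ = ∑ C ∈ π.toFinset, ((bad C).card : ℝ) := by push_cast; rfl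
        _ ≤ ∑ _C ∈ π.toFinset, (8 : ℝ) ^ (k * q) * (7 / 8) ^ W :=
            Finset.sum_le_sum (fun C _ => hterm C)
        _ = (π.toFinset.card : ℝ) * ((8 : ℝ) ^ (k * q) * (7 / 8) ^ W) := by
            rw [Finset.sum_const, nsmul_eq_mul]
        _ ≤ (π.length : ℝ) * ((8 : ℝ) ^ (k * q) * (7 / 8) ^ W) := by
            apply mul_le_mul_of_nonneg_right _ (by positivity)
            exact_mod_cast π.toFinset_card_le
    have hpos : (0 : ℝ) < (8 : ℝ) ^ (k * q) * (7 / 8) ^ W := by positivity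
    have hlt2 : (π.length : ℝ) * ((8 : ℝ) ^ (k * q) * (7 / 8) ^ W)
        < ((8 : ℝ) / 7) ^ W * ((8 : ℝ) ^ (k * q) * (7 / 8) ^ W) :=
      mul_lt_mul_of_pos_right hlenlt hpos
    have heq1 : ((8 : ℝ) / 7) ^ W * ((8 : ℝ) ^ (k * q) * (7 / 8) ^ W) = (8 : ℝ) ^ (k * q) := by
      rw [← mul_assoc, mul_comm (((8 : ℝ) / 7) ^ W), mul_assoc, ← mul_pow]
      norm_num
    linarith
  obtain ⟨ω, hgoodω⟩ := hgood
  -- build the context and run the adversary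
  have hExtX : ∀ U : Finset (Fin k × Fin n), U.card = m →
      (∀ u ∈ U, ∀ v ∈ U, u.1 = v.1 → u = v) →
      ∀ σ : Restriction (Fin k × Fin L), BTotal (3/4) k L σ →
      ∀ b : Fin k, (∀ u ∈ U, u.1 ≠ b) →
      ∃ a : Fin n, (∀ u ∈ U, G.Adj (b, a) u) ∧ ConsistentWith σ b a.val := by
    intro U hU htrans σ hσ b hb
    exact hext U ⟨hU, htrans⟩ σ hσ b hb
  set X : Ctx k n L :=
    ⟨G, τω ω, m, acnt, tt, B, hn, hnum4, hnum3, hnum1, hnum2, hτcnt ω, hBeq, hExtX⟩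
    with hXdef
  have haxForced : ∀ C ∈ restrictCnf ρ (BinClique L G), X.Forced 2 C := by
    intro C hC
    exact X.forced_axiom ρ (fun v bb h => hτsome ω v bb h) C hC
  have hnf2t : ¬ X.Forced (2 * t) ∅ := by
    rintro ⟨R, hRc, hwit⟩
    obtain ⟨η, hη⟩ := X.Hmem_nonempty R (le_trans hRc h2tm)
    obtain ⟨l, hl, -⟩ := hwit η hη
    simp at hl
  obtain ⟨Cs, hCsmem, hCsnf, hCsf⟩ := X.exists_crit (restrictCnf ρ (BinClique L G)) π hπ
    haxForced t ht2 hnf2t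
  obtain ⟨R, hRt, hRwide, η₀, hη₀, hη₀ns⟩ := X.crit_wide t ht2 h2tm Cs hCsnf hCsf
  apply hgoodω Cs hCsmem
  constructor
  · -- W ≤ (VCov Cs).card
    set good : Fin k → Finset (Fin k × Fin L) := fun i =>
      (Finset.univ.filter (fun jj : Fin L => (X.τ (i, jj) = none ∧
        (((i, jj), true) ∈ Cs ∨ ((i, jj), false) ∈ Cs)) ∧ (∃ c r, pos i c r = jj))).image
        (fun jj => ((i, jj) : Fin k × Fin L)) with hgooddef
    have hgcard : ∀ i ∈ R, tt - 3 ≤ (good i).card := by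
      intro i hi
      have hwide := hRwide i hi
      simp only [hgooddef]
      rw [Finset.card_image_of_injective _ (fun a b h => by
        simpa using congrArg Prod.snd h)]
      rw [← Finset.filter_filter]
      set FVi := Finset.univ.filter (fun jj : Fin L => X.τ (i, jj) = none ∧
        (((i, jj), true) ∈ Cs ∨ ((i, jj), false) ∈ Cs)) with hFVidef
      have hsplit := Finset.card_filter_add_card_filter_not
        (s := FVi) (p := fun jj => ∃ c r, pos i c r = jj)
      have hbad3 : (FVi.filter (fun jj => ¬ ∃ c r, pos i c r = jj)).card ≤ 3 := by
        have hss : FVi.filter (fun jj => ¬ ∃ c r, pos i c r = jj)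
            ⊆ (Finset.univ.filter (fun jj : Fin L => ρ (i, jj) = none))
              \ (Finset.univ.image (fun p : Fin q × Fin 4 => pos i p.1 p.2)) := by
          intro jj hjj
          obtain ⟨hFV, hnc⟩ := Finset.mem_filter.mp hjj
          obtain ⟨-, hτn, -⟩ := Finset.mem_filter.mp hFV
          rw [Finset.mem_sdiff]
          constructor
          · exact Finset.mem_filter.mpr ⟨Finset.mem_univ _, hτnone' ω (i, jj) hτn⟩
          · intro hmem
            obtain ⟨p, -, hp⟩ := Finset.mem_image.mp hmem
            exact hnc ⟨p.1, p.2, hp⟩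
        have himg : (Finset.univ.image (fun p : Fin q × Fin 4 => pos i p.1 p.2))
            ⊆ Finset.univ.filter (fun jj : Fin L => ρ (i, jj) = none) := by
          intro jj hjj
          obtain ⟨p, -, hp⟩ := Finset.mem_image.mp hjj
          rw [← hp]
          exact Finset.mem_filter.mpr ⟨Finset.mem_univ _, hposfree i p.1 p.2⟩
        have hcardsd := Finset.card_le_card hss
        rw [Finset.card_sdiff_of_subset himg] at hcardsd
        rw [Finset.card_image_of_injective _ (fun p p' h => by
          obtain ⟨h1, h2⟩ := hposinj i p.1 p.2 p'.1 p'.2 h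
          exact Prod.ext h1 h2)] at hcardsd
        rw [hfree i, Finset.card_univ, Fintype.card_prod, Fintype.card_fin,
          Fintype.card_fin] at hcardsd
        omega
      have hwide' : tt ≤ FVi.card := hwide
      omega
    have hdisj : ∀ i ∈ R, ∀ i' ∈ R, i ≠ i' → Disjoint (good i) (good i') := by
      intro i _ i' _ hne
      rw [Finset.disjoint_left]
      intro v hv hv'
      simp only [hgooddef] at hv hv'
      obtain ⟨jj, -, rfl⟩ := Finset.mem_image.mp hv
      obtain ⟨jj', -, heq'⟩ := Finset.mem_image.mp hv'
      exact hne ((Prod.ext_iff.mp heq').1).symm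
    have hsubU : R.biUnion good ⊆ VCov Cs := by
      intro v hv
      obtain ⟨i, -, hv'⟩ := Finset.mem_biUnion.mp hv
      simp only [hgooddef] at hv'
      obtain ⟨jj, hjj, rfl⟩ := Finset.mem_image.mp hv'
      obtain ⟨-, ⟨-, hlits⟩, hcov⟩ := Finset.mem_filter.mp hjj
      exact Finset.mem_filter.mpr ⟨Finset.mem_univ _, hcov, hlits⟩
    calc W = (t + 1) * (tt - 3) := hWdef
      _ ≤ R.card * (tt - 3) := Nat.mul_le_mul_right _ hRt
      _ = ∑ _i ∈ R, (tt - 3) := by rw [Finset.sum_const, smul_eq_mul]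
      _ ≤ ∑ i ∈ R, (good i).card := Finset.sum_le_sum hgcard
      _ = (R.biUnion good).card := (Finset.card_biUnion hdisj).symm
      _ ≤ (VCov Cs).card := Finset.card_le_card hsubU
  · intro v hv bb hlit heq
    apply hη₀ns
    have hρv : ρ v = none := by
      obtain ⟨i, j⟩ := v
      obtain ⟨⟨c, r, hcr⟩, -⟩ := (Finset.mem_filter.mp hv).2
      have hcr' : pos i c r = j := hcr
      rw [← hcr']
      exact hposfree i c r
    have hτv : τω ω v = some bb := by
      rw [hτnone ω v hρv]
      exact heq
    obtain ⟨hag, -⟩ := hη₀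
    exact ⟨(v, bb), hlit, hag v bb hτv⟩
end PC
end

section
/- Let n be a power of 2, let k ≥ 1, and let s ≥ 1 be an integer with s ≤ ((1/5)·log log n)^{1/3}. Consider the uniform distribution over random s-restrictions of the variables ω_{i,j} (i ∈ [k], j ∈ [log n]). Say that a tuple of literals survives a restriction ρ if ρ does not set all the literals of the tuple to false. Then for every s-tuple S of literals on pairwise distinct variables and every perfect s-tuple T (an s-tuple whose s literals are on s distinct variables all belonging to one block): Pr[S survives ρ] ≤ Pr[T survives ρ], and consequently Pr[S survives ρ] ≤ 1 − 1/2^{s²+3s}. -/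
open scoped Classical

namespace PC

section SurvHelpers


lemma descFactorial_pos' {n k : ℕ} (h : k ≤ n) : 0 < n.descFactorial k :=
  Nat.pos_of_ne_zero fun h0 => absurd (Nat.descFactorial_eq_zero_iff_lt.1 h0) (not_lt.2 h)

lemma descA (L t a b : ℕ) (h : t ≤ L) :
    (t - a).descFactorial b * L.descFactorial b ≤
      t.descFactorial b * (L - a).descFactorial b := by
  induction b with
  | zero => simp
  | succ b ih =>
    rw [Nat.descFactorial_succ, Nat.descFactorial_succ, Nat.descFactorial_succ,
      Nat.descFactorial_succ]
    have key : (t - a - b) * (L - b) ≤ (t - b) * (L - a - b) := by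
      rcases Nat.le_total (a + b) t with h1 | h1
      · zify [show b ≤ t - a by omega, show a ≤ t by omega,
          show b ≤ t by omega, show b ≤ L by omega, show b ≤ L - a by omega,
          show a ≤ L by omega]
        nlinarith [mul_nonneg (show (0:ℤ) ≤ a by positivity) (show (0:ℤ) ≤ (L:ℤ) - t by
          simp only [sub_nonneg]; exact_mod_cast h)]
      · have h0 : t - a - b = 0 := by omega
        simp [h0]
    have h2 := Nat.mul_le_mul key ih
    calc (t - a - b) * (t - a).descFactorial b * ((L - b) * L.descFactorial b)
        = (t - a - b) * (L - b) * ((t - a).descFactorial b * L.descFactorial b) := by ring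
      _ ≤ (t - b) * (L - a - b) * (t.descFactorial b * (L - a).descFactorial b) := h2
      _ = (t - b) * t.descFactorial b * ((L - a - b) * (L - a).descFactorial b) := by ring

/-- Identity: C(L,t) * t↓a = C(L-a, t-a) * L↓a for a ≤ t ≤ L. -/
lemma chooseB (L t : ℕ) (h : t ≤ L) : ∀ a, a ≤ t →
    L.choose t * t.descFactorial a = (L - a).choose (t - a) * L.descFactorial a := by
  intro a
  induction a with
  | zero => simp
  | succ a ih =>
    intro hat
    have ha : a ≤ t := by omega
    rw [Nat.descFactorial_succ, Nat.descFactorial_succ]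
    have key : (t - a) * ((L - a).choose (t - a)) =
        (L - a) * ((L - (a+1)).choose (t - (a+1))) := by
      have h1 : L - a = (L - (a+1)) + 1 := by omega
      have h2 : t - a = (t - (a+1)) + 1 := by omega
      have key := Nat.add_one_mul_choose_eq (L - (a+1)) (t - (a+1))
      rw [h1, h2, mul_comm, ← key]
    calc L.choose t * ((t - a) * t.descFactorial a)
        = (t - a) * (L.choose t * t.descFactorial a) := by ring
      _ = (t - a) * ((L - a).choose (t - a) * L.descFactorial a) := by rw [ih ha]
      _ = ((t - a) * (L - a).choose (t - a)) * L.descFactorial a := by ring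
      _ = ((L - a) * (L - (a+1)).choose (t - (a+1))) * L.descFactorial a := by rw [key]
      _ = (L - (a+1)).choose (t - (a+1)) * ((L - a) * L.descFactorial a) := by ring

/-- Two-block superadditivity for survival counts. -/
lemma chooseC (L t a b : ℕ) (hab : a + b ≤ t) (h : t ≤ L) :
    (L - (a + b)).choose (t - (a + b)) * L.choose t ≤
      (L - a).choose (t - a) * (L - b).choose (t - b) := by
  have hCpos : 0 < L.choose t := Nat.choose_pos h
  have hDab : 0 < L.descFactorial (a + b) := descFactorial_pos' (by omega)
  have hDb : 0 < L.descFactorial b := descFactorial_pos' (by omega)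
  -- step : C * (t-a)↓b ≤ C(L-b,t-b) * (L-a)↓b
  have step : L.choose t * (t - a).descFactorial b ≤
      (L - b).choose (t - b) * (L - a).descFactorial b := by
    have core := descA L t a b h
    have h1 : L.choose t * (t - a).descFactorial b * L.descFactorial b ≤
        (L - b).choose (t - b) * (L - a).descFactorial b * L.descFactorial b := by
      calc L.choose t * (t - a).descFactorial b * L.descFactorial b
          = L.choose t * ((t - a).descFactorial b * L.descFactorial b) := by ring
        _ ≤ L.choose t * (t.descFactorial b * (L - a).descFactorial b) :=
            Nat.mul_le_mul_left _ core
        _ = (L.choose t * t.descFactorial b) * (L - a).descFactorial b := by ring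
        _ = ((L - b).choose (t - b) * L.descFactorial b) * (L - a).descFactorial b := by
            rw [chooseB L t h b (by omega)]
        _ = (L - b).choose (t - b) * (L - a).descFactorial b * L.descFactorial b := by ring
    exact Nat.le_of_mul_le_mul_right h1 hDb
  have hsplitL : (t - a).descFactorial b * t.descFactorial a = t.descFactorial (a + b) := by
    have := Nat.descFactorial_mul_descFactorial (k := a) (m := a + b) (n := t) (by omega)
    simpa [Nat.add_sub_cancel_left] using this
  have hsplitL' : (L - a).descFactorial b * L.descFactorial a = L.descFactorial (a + b) := by
    have := Nat.descFactorial_mul_descFactorial (k := a) (m := a + b) (n := L) (by omega)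
    simpa [Nat.add_sub_cancel_left] using this
  have main : (L - (a + b)).choose (t - (a + b)) * L.choose t * L.descFactorial (a + b) ≤
      (L - a).choose (t - a) * (L - b).choose (t - b) * L.descFactorial (a + b) := by
    calc (L - (a + b)).choose (t - (a + b)) * L.choose t * L.descFactorial (a + b)
        = ((L - (a+b)).choose (t - (a+b)) * L.descFactorial (a + b)) * L.choose t := by ring
      _ = (L.choose t * t.descFactorial (a + b)) * L.choose t := by
          rw [← chooseB L t h (a + b) hab]
      _ = ((L.choose t * (t - a).descFactorial b) * t.descFactorial a) * L.choose t := by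
          rw [← hsplitL]; ring
      _ ≤ (((L - b).choose (t - b) * (L - a).descFactorial b) * t.descFactorial a) *
            L.choose t := by
          exact Nat.mul_le_mul_right _ (Nat.mul_le_mul_right _ step)
      _ = (L.choose t * t.descFactorial a) * ((L - b).choose (t - b) *
            (L - a).descFactorial b) := by ring
      _ = ((L - a).choose (t - a) * L.descFactorial a) * ((L - b).choose (t - b) *
            (L - a).descFactorial b) := by rw [chooseB L t h a (by omega)]
      _ = (L - a).choose (t - a) * (L - b).choose (t - b) *
            ((L - a).descFactorial b * L.descFactorial a) := by ring
      _ = (L - a).choose (t - a) * (L - b).choose (t - b) * L.descFactorial (a + b) := by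
          rw [hsplitL']
  exact Nat.le_of_mul_le_mul_right main hDab




section Helpers1
variable {α : Type*} [Fintype α] [DecidableEq α]

/-- Number of `t`-subsets of `univ` containing a given set `A`. -/
lemma card_supersets (A : Finset α) (t : ℕ) (hAt : A.card ≤ t) :
    ((Finset.powersetCard t (Finset.univ : Finset α)).filter fun B => A ⊆ B).card =
      (Fintype.card α - A.card).choose (t - A.card) := by
  have h : ((Finset.powersetCard t (Finset.univ : Finset α)).filter fun B => A ⊆ B).card =
      (Finset.powersetCard (t - A.card) ((Finset.univ : Finset α) \ A)).card := by
    apply Finset.card_nbij' (fun B => B \ A) (fun C => C ∪ A)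
    · intro B hB
      simp only [Finset.mem_coe, Finset.mem_filter, Finset.mem_powersetCard] at hB
      obtain ⟨⟨_, hcard⟩, hAB⟩ := hB
      simp only [Finset.mem_coe, Finset.mem_powersetCard]
      constructor
      · intro x hx; simp only [Finset.mem_sdiff] at hx ⊢; exact ⟨Finset.mem_univ _, hx.2⟩
      · rw [Finset.card_sdiff_of_subset hAB, hcard]
    · intro C hC
      simp only [Finset.mem_coe, Finset.mem_powersetCard, Finset.subset_sdiff] at hC
      obtain ⟨⟨hCu, hdisj⟩, hcard⟩ := hC
      simp only [Finset.mem_coe, Finset.mem_filter, Finset.mem_powersetCard]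
      refine ⟨⟨Finset.subset_univ _, ?_⟩, Finset.subset_union_right⟩
      rw [Finset.card_union_of_disjoint hdisj, hcard]
      omega
    · intro B hB
      simp only [Finset.mem_coe, Finset.mem_filter, Finset.mem_powersetCard] at hB
      exact Finset.sdiff_union_of_subset hB.2
    · intro C hC
      simp only [Finset.mem_coe, Finset.mem_powersetCard, Finset.subset_sdiff] at hC
      exact Finset.union_sdiff_cancel_right hC.1.2
  rw [h, Finset.card_powersetCard]
  congr 1
  rw [Finset.card_sdiff_of_subset (Finset.subset_univ A), Finset.card_univ]


end Helpers1

section Helpers2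
open Finset
variable {α : Type*} [Fintype α] [DecidableEq α]

/-- Count of total-support-`B` extensions of a forced partial assignment `p`. -/
lemma card_fiber (p : α → Option Bool) (B : Finset α)
    (hAB : (Finset.univ.filter fun j => p j ≠ none) ⊆ B) :
    (Finset.univ.filter fun g : α → Option Bool =>
        (∀ j, p j ≠ none → g j = p j) ∧ (Finset.univ.filter fun j => g j ≠ none) = B).card =
      2 ^ (B \ (Finset.univ.filter fun j => p j ≠ none)).card := by
  set A := (Finset.univ.filter fun j => p j ≠ none) with hA
  have key : (Finset.univ.filter fun g : α → Option Bool =>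
        (∀ j, p j ≠ none → g j = p j) ∧ (Finset.univ.filter fun j => g j ≠ none) = B).card =
      ((B \ A).pi fun _ => (Finset.univ : Finset Bool)).card := by
    apply Finset.card_bij' (i := fun g _ => fun x _ => (g x).getD true)
      (j := fun h _ => fun x =>
        if x ∈ A then p x else if hx : x ∈ B \ A then some (h x hx) else none)
    · intro g hg
      simp [Finset.mem_pi]
    · intro h hh
      simp only [Finset.mem_filter, Finset.mem_univ, true_and]
      constructor
      · intro j hj
        have : j ∈ A := by simp [hA, hj]
        simp [this]
      · ext x
        simp only [Finset.mem_filter, Finset.mem_univ, true_and]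
        by_cases hx1 : x ∈ A
        · have hpx : p x ≠ none := by simpa [hA] using hx1
          simp [hx1, hpx, hAB hx1]
        · by_cases hx2 : x ∈ B
          · have : x ∈ B \ A := Finset.mem_sdiff.2 ⟨hx2, hx1⟩
            simp [hx1, this, hx2]
          · have : x ∉ B \ A := fun hx => hx2 (Finset.mem_sdiff.1 hx).1
            simp [hx1, this, hx2]
    · intro g hg
      simp only [Finset.mem_filter, Finset.mem_univ, true_and] at hg
      obtain ⟨hg1, hg2⟩ := hg
      funext x
      by_cases hx1 : x ∈ A
      · have hpx : p x ≠ none := by simpa [hA] using hx1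
        simp [hx1, (hg1 x hpx).symm]
      · by_cases hx2 : x ∈ B
        · have hmem : x ∈ B \ A := Finset.mem_sdiff.2 ⟨hx2, hx1⟩
          have hgx : g x ≠ none := by
            rw [← hg2] at hx2
            simpa using (Finset.mem_filter.1 hx2).2
          obtain ⟨v, hv⟩ := Option.ne_none_iff_exists'.1 hgx
          simp [hx1, hmem, hv]
        · have hmem : x ∉ B \ A := fun hx => hx2 (Finset.mem_sdiff.1 hx).1
          have hgx : g x = none := by
            by_contra hne
            exact hx2 (hg2 ▸ Finset.mem_filter.2 ⟨Finset.mem_univ _, hne⟩)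
          simp [hx1, hmem, hgx]
    · intro h hh
      funext x hx
      have hx1 : x ∉ A := (Finset.mem_sdiff.1 hx).2
      simp [hx1, hx]
  rw [key, Finset.card_pi]
  simp

/-- The per-block count: restrictions with exactly `t` assigned bits extending a
forced partial assignment `p` with `m ≤ t` forced bits. -/
lemma card_block (t : ℕ) (p : α → Option Bool)
    (hm : (Finset.univ.filter fun j => p j ≠ none).card ≤ t) :
    (Finset.univ.filter fun g : α → Option Bool =>
        (Finset.univ.filter fun j => g j ≠ none).card = t ∧
        (∀ j, p j ≠ none → g j = p j)).card =
      (Fintype.card α - (Finset.univ.filter fun j => p j ≠ none).card).choose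
          (t - (Finset.univ.filter fun j => p j ≠ none).card) *
        2 ^ (t - (Finset.univ.filter fun j => p j ≠ none).card) := by
  set A := (Finset.univ.filter fun j => p j ≠ none) with hA
  rw [Finset.card_eq_sum_card_fiberwise
    (f := fun g : α → Option Bool => Finset.univ.filter fun j => g j ≠ none)
    (t := Finset.powersetCard t (Finset.univ : Finset α))
    (fun g hg => by
      simp only [Finset.mem_coe, Finset.mem_filter, Finset.mem_univ, true_and] at hg
      exact Finset.mem_powersetCard.2 ⟨Finset.subset_univ _, hg.1⟩)]
  have hstep : ∀ B ∈ Finset.powersetCard t (Finset.univ : Finset α),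
      ((Finset.univ.filter fun g : α → Option Bool =>
          (Finset.univ.filter fun j => g j ≠ none).card = t ∧
          (∀ j, p j ≠ none → g j = p j)).filter
        (fun g => (Finset.univ.filter fun j => g j ≠ none) = B)).card =
      if A ⊆ B then 2 ^ (t - A.card) else 0 := by
    intro B hB
    have hBcard : B.card = t := (Finset.mem_powersetCard.1 hB).2
    rw [Finset.filter_filter]
    by_cases hAB : A ⊆ B
    · rw [if_pos hAB]
      have heq : (Finset.univ.filter fun g : α → Option Bool =>
          ((Finset.univ.filter fun j => g j ≠ none).card = t ∧
            (∀ j, p j ≠ none → g j = p j)) ∧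
          (Finset.univ.filter fun j => g j ≠ none) = B) =
          (Finset.univ.filter fun g : α → Option Bool =>
          (∀ j, p j ≠ none → g j = p j) ∧
          (Finset.univ.filter fun j => g j ≠ none) = B) := by
        apply Finset.filter_congr
        intro g _
        constructor
        · rintro ⟨⟨_, h2⟩, h3⟩; exact ⟨h2, h3⟩
        · rintro ⟨h2, h3⟩; exact ⟨⟨by rw [h3, hBcard], h2⟩, h3⟩
      rw [heq, card_fiber p B hAB, Finset.card_sdiff_of_subset hAB, hBcard]
    · rw [if_neg hAB]
      rw [Finset.card_eq_zero, Finset.filter_eq_empty_iff]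
      intro g _
      rintro ⟨⟨_, h2⟩, h3⟩
      obtain ⟨j, hjA, hjB⟩ := Finset.not_subset.1 hAB
      have hpj : p j ≠ none := by simpa [hA] using hjA
      exact hjB (h3 ▸ Finset.mem_filter.2 ⟨Finset.mem_univ _,
        fun hc => hpj (by rw [← h2 j hpj]; exact hc)⟩)
  rw [Finset.sum_congr rfl hstep, Finset.sum_ite, Finset.sum_const, Finset.sum_const,
    smul_eq_mul, smul_eq_mul, Nat.mul_zero, Nat.add_zero]
  rw [card_supersets A t hm]

end Helpers2



lemma card_prod {k : ℕ} {α γ : Type*} [Fintype α] [Fintype γ] [DecidableEq α]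
    (Q : Fin k → (α → γ) → Prop) :
    (Finset.univ.filter fun f : Fin k × α → γ => ∀ i, Q i fun j => f (i, j)).card =
      ∏ i, (Finset.univ.filter fun g : α → γ => Q i g).card := by
  rw [← Fintype.card_subtype]
  have e : {f : Fin k × α → γ // ∀ i, Q i fun j => f (i, j)} ≃ ∀ i, {g : α → γ // Q i g} :=
    ((Equiv.curry (Fin k) α γ).subtypeEquiv fun f => Iff.rfl).trans Equiv.subtypePiEquivPi
  rw [Fintype.card_congr e, Fintype.card_pi]
  exact Finset.prod_congr rfl fun i _ => Fintype.card_subtype _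

lemma prodC {k : ℕ} (L t : ℕ) (h : t ≤ L) (m : Fin k → ℕ) :
    ∀ F : Finset (Fin k), (∑ i ∈ F, m i) ≤ t →
    (L - ∑ i ∈ F, m i).choose (t - ∑ i ∈ F, m i) * (L.choose t) ^ F.card ≤
      L.choose t * ∏ i ∈ F, (L - m i).choose (t - m i) := by
  intro F
  induction F using Finset.induction_on with
  | empty => simp
  | insert a F hnotmem ih =>
    intro hsum
    rw [Finset.sum_insert hnotmem] at hsum ⊢
    rw [Finset.prod_insert hnotmem, Finset.card_insert_of_notMem hnotmem]
    have hstep := chooseC L t (m a) (∑ i ∈ F, m i) hsum h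
    have hih := ih (by omega)
    calc (L - (m a + ∑ i ∈ F, m i)).choose (t - (m a + ∑ i ∈ F, m i)) *
          L.choose t ^ (F.card + 1)
        = ((L - (m a + ∑ i ∈ F, m i)).choose (t - (m a + ∑ i ∈ F, m i)) * L.choose t) *
            L.choose t ^ F.card := by ring
      _ ≤ ((L - m a).choose (t - m a) * (L - ∑ i ∈ F, m i).choose (t - ∑ i ∈ F, m i)) *
            L.choose t ^ F.card := Nat.mul_le_mul_right _ hstep
      _ = (L - m a).choose (t - m a) *
            ((L - ∑ i ∈ F, m i).choose (t - ∑ i ∈ F, m i) * L.choose t ^ F.card) := by ring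
      _ ≤ (L - m a).choose (t - m a) * (L.choose t * ∏ i ∈ F, (L - m i).choose (t - m i)) :=
            Nat.mul_le_mul_left _ hih
      _ = L.choose t * ((L - m a).choose (t - m a) * ∏ i ∈ F, (L - m i).choose (t - m i)) := by
            ring

lemma hub_L (L s : ℕ) (hs : 1 ≤ s)
    (hub : (s : ℝ) ≤ ((1 / 5) * Real.logb 2 (L : ℝ)) ^ ((1 : ℝ) / 3)) :
    2 ^ (5 * s ^ 3) ≤ L := by
  by_cases hL1 : L ≤ 1
  · exfalso
    have hlog : Real.logb 2 (L : ℝ) = 0 := by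
      interval_cases L <;> simp
    rw [hlog, mul_zero, Real.zero_rpow (by norm_num : (1:ℝ)/3 ≠ 0)] at hub
    have : (1 : ℝ) ≤ (s : ℝ) := by exact_mod_cast hs
    linarith
  · push_neg at hL1
    have hL2 : (2 : ℕ) ≤ L := hL1
    have hL1R : (1 : ℝ) ≤ (L : ℝ) := by exact_mod_cast Nat.one_le_of_lt hL1
    have hLpos : (0 : ℝ) < (L : ℝ) := by linarith
    have hlognn : 0 ≤ Real.logb 2 (L : ℝ) := Real.logb_nonneg one_lt_two hL1R
    have hx : (0 : ℝ) ≤ 1 / 5 * Real.logb 2 (L : ℝ) := by positivity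
    have h3 : ((s : ℝ)) ^ (3 : ℕ) ≤
        ((1 / 5 * Real.logb 2 (L : ℝ)) ^ ((1:ℝ)/3)) ^ (3 : ℕ) :=
      pow_le_pow_left₀ (by positivity) hub 3
    have hcube : ((1 / 5 * Real.logb 2 (L : ℝ)) ^ ((1:ℝ)/3)) ^ (3 : ℕ) =
        1 / 5 * Real.logb 2 (L : ℝ) := by
      rw [← Real.rpow_natCast ((1 / 5 * Real.logb 2 (L : ℝ)) ^ ((1:ℝ)/3)) 3,
        ← Real.rpow_mul hx]
      norm_num
    rw [hcube] at h3
    have hlb : 5 * (s : ℝ) ^ 3 ≤ Real.logb 2 (L : ℝ) := by linarith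
    have hpow : (2 : ℝ) ^ (5 * (s : ℝ) ^ 3) ≤ (L : ℝ) := by
      have := Real.rpow_le_rpow_of_exponent_le (x := (2:ℝ)) one_le_two hlb
      rwa [Real.rpow_logb (by norm_num) (by norm_num) hLpos] at this
    have hER : ((5 * s ^ 3 : ℕ) : ℝ) = 5 * (s : ℝ) ^ 3 := by push_cast; ring
    have hfin : ((2 ^ (5 * s ^ 3) : ℕ) : ℝ) ≤ (L : ℝ) := by
      push_cast
      rw [← Real.rpow_natCast (2 : ℝ) (5 * s ^ 3), hER]
      exact hpow
    exact_mod_cast hfin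




/-- Bridge between filters with different decidability instances / syntactic forms. -/
lemma card_filter_ext {α : Type*} {s : Finset α} {p q : α → Prop}
    {h1 : DecidablePred p} {h2 : DecidablePred q} (h : ∀ x, p x ↔ q x) :
    (@Finset.filter α p h1 s).card = (@Finset.filter α q h2 s).card := by
  congr 1
  ext x
  simp only [Finset.mem_filter]
  exact and_congr Iff.rfl (h x)

/-- Product over blocks of per-block restriction counts. -/
lemma card_prod_block {k : ℕ} {α : Type*} [Fintype α] [DecidableEq α]
    (t : ℕ) (p : Fin k → α → Option Bool)
    (hm : ∀ i, (Finset.univ.filter fun j => p i j ≠ none).card ≤ t) :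
    (Finset.univ.filter fun f : Fin k × α → Option Bool =>
        (∀ i, (Finset.univ.filter fun j => f (i, j) ≠ none).card = t) ∧
        (∀ i j, p i j ≠ none → f (i, j) = p i j)).card =
      ∏ i, ((Fintype.card α - (Finset.univ.filter fun j => p i j ≠ none).card).choose
          (t - (Finset.univ.filter fun j => p i j ≠ none).card) *
        2 ^ (t - (Finset.univ.filter fun j => p i j ≠ none).card)) := by
  have base := card_prod (k := k) (α := α) (γ := Option Bool)
      (Q := fun i g => (Finset.univ.filter fun j => g j ≠ none).card = t ∧
        ∀ j, p i j ≠ none → g j = p i j)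
  refine Eq.trans (card_filter_ext fun f => ?_) (base.trans
    (Finset.prod_congr rfl fun i _ =>
      Eq.trans (card_filter_ext fun g => Iff.rfl) (card_block t (p i) (hm i))))
  constructor
  · rintro ⟨h1, h2⟩ i
    exact ⟨h1 i, fun j hj => h2 i j hj⟩
  · intro h
    exact ⟨fun i => (h i).1, fun i j hj => (h i).2 j hj⟩

/-- Descending-factorial comparison from termwise bounds. -/
lemma desc_bound (c t L : ℕ) : ∀ a, (∀ j, j < a → L - j ≤ c * (t - j)) →
    L.descFactorial a ≤ c ^ a * t.descFactorial a := by
  intro a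
  induction a with
  | zero => simp
  | succ a ih =>
    intro h
    rw [Nat.descFactorial_succ, Nat.descFactorial_succ]
    have h1 := h a (lt_add_one a)
    have h2 := ih fun j hj => h j (by omega)
    calc (L - a) * L.descFactorial a
        ≤ (c * (t - a)) * (c ^ a * t.descFactorial a) := Nat.mul_le_mul h1 h2
      _ = c ^ (a + 1) * ((t - a) * t.descFactorial a) := by ring

/-- All numeric facts about `t = L / 2^(s+1)`. -/
lemma numeric (L s t : ℕ) (hs : 1 ≤ s) (hL : 2 ^ (5 * s ^ 3) ≤ L)
    (ht : t = L / 2 ^ (s + 1)) :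
    s ≤ t ∧ t ≤ L ∧ L.choose t ≤ 2 ^ (s ^ 2 + 2 * s) * (L - s).choose (t - s) := by
  have hs3 : s ≤ s ^ 3 := Nat.le_self_pow (by norm_num) s
  have hexp : 2 * s + 2 ≤ 5 * s ^ 3 := by nlinarith
  have hLbig : 2 ^ (2 * s + 2) ≤ L := le_trans (Nat.pow_le_pow_right (by norm_num) hexp) hL
  have hs2 : s + 1 ≤ 2 ^ s := Nat.lt_two_pow_self
  have hLP : 2 ^ (s + 2) * (s + 1) ≤ L := by
    calc 2 ^ (s + 2) * (s + 1) ≤ 2 ^ (s + 2) * 2 ^ s := Nat.mul_le_mul_left _ hs2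
      _ = 2 ^ (2 * s + 2) := by rw [← pow_add]; ring_nf
      _ ≤ L := hLbig
  subst ht
  have hdm := Nat.div_add_mod L (2 ^ (s + 1))
  have hmod : L % 2 ^ (s + 1) < 2 ^ (s + 1) := Nat.mod_lt _ (by positivity)
  have h2s2 : (2 : ℕ) ^ (s + 2) = 2 * 2 ^ (s + 1) := by rw [pow_succ]; ring
  have e3 : 2 ^ (s + 2) * (L / 2 ^ (s + 1)) = 2 * (2 ^ (s + 1) * (L / 2 ^ (s + 1))) := by
    rw [h2s2]; ring
  have e4 : 2 ^ (s + 2) * s + 2 ^ (s + 2) = 2 ^ (s + 2) * (s + 1) := by ring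
  have hkey : L + 2 ^ (s + 2) * s ≤ 2 ^ (s + 2) * (L / 2 ^ (s + 1)) := by
    linarith [hdm, hmod, hLP, e3, e4, h2s2]
  have hpos : 0 < 2 ^ (s + 2) := by positivity
  have hts : s ≤ L / 2 ^ (s + 1) := by
    have h1 : 2 ^ (s + 2) * s ≤ 2 ^ (s + 2) * (L / 2 ^ (s + 1)) := by linarith
    exact Nat.le_of_mul_le_mul_left h1 hpos
  have htL : L / 2 ^ (s + 1) ≤ L := Nat.div_le_self _ _
  refine ⟨hts, htL, ?_⟩
  set t := L / 2 ^ (s + 1) with htdef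
  have hj : ∀ j, j < s → L - j ≤ 2 ^ (s + 2) * (t - j) := by
    intro j hjs
    have hsplitt : 2 ^ (s + 2) * t = 2 ^ (s + 2) * (t - j) + 2 ^ (s + 2) * j := by
      rw [← Nat.mul_add]
      congr 1
      omega
    have hj2 : 2 ^ (s + 2) * j ≤ 2 ^ (s + 2) * s := Nat.mul_le_mul_left _ (le_of_lt hjs)
    have hLle : L ≤ 2 ^ (s + 2) * (t - j) := by linarith
    exact le_trans (Nat.sub_le L j) hLle
  have hdesc : L.descFactorial s ≤ 2 ^ (s ^ 2 + 2 * s) * t.descFactorial s := by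
    have := desc_bound (2 ^ (s + 2)) t L s hj
    calc L.descFactorial s ≤ (2 ^ (s + 2)) ^ s * t.descFactorial s := this
      _ = 2 ^ (s ^ 2 + 2 * s) * t.descFactorial s := by
          rw [← pow_mul]
          congr 1
          ring
  have hid := chooseB L t htL s hts
  have hstep : L.choose t * t.descFactorial s ≤
      (2 ^ (s ^ 2 + 2 * s) * (L - s).choose (t - s)) * t.descFactorial s := by
    calc L.choose t * t.descFactorial s
        = (L - s).choose (t - s) * L.descFactorial s := hid
      _ ≤ (L - s).choose (t - s) * (2 ^ (s ^ 2 + 2 * s) * t.descFactorial s) :=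
          Nat.mul_le_mul_left _ hdesc
      _ = (2 ^ (s ^ 2 + 2 * s) * (L - s).choose (t - s)) * t.descFactorial s := by ring
  exact Nat.le_of_mul_le_mul_right hstep (descFactorial_pos' hts)

lemma sum_fibers {k s : ℕ} (g : Fin s → Fin k) :
    ∑ i : Fin k, (Finset.univ.filter fun idx => g idx = i).card = s := by
  have := Finset.card_eq_sum_card_fiberwise (f := g) (s := Finset.univ)
    (t := Finset.univ) fun x _ => Finset.mem_univ _
  simpa using this.symm

/-- The number of `s`-restrictions falsifying all literals of a tuple `S`
with pairwise distinct variables. -/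
lemma count_fail {L k s : ℕ} (t : ℕ) (hts : s ≤ t)
    (S : Fin s → (Fin k × Fin L) × Bool)
    (hS : Function.Injective fun i => (S i).1) :
    (Finset.univ.filter fun f : Fin k × Fin L → Option Bool =>
        (∀ i : Fin k, (Finset.univ.filter fun j => f (i, j) ≠ none).card = t) ∧
        ∀ idx : Fin s, f (S idx).1 = some (!(S idx).2)).card =
      (∏ i : Fin k, (L - (Finset.univ.filter fun idx : Fin s =>
          (S idx).1.1 = i).card).choose
          (t - (Finset.univ.filter fun idx : Fin s => (S idx).1.1 = i).card)) *
        2 ^ (k * t - s) := by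
  set m : Fin k → ℕ :=
    fun i => (Finset.univ.filter fun idx : Fin s => (S idx).1.1 = i).card with hmdef
  set p : Fin k → Fin L → Option Bool := fun i j =>
    if h : ∃ idx : Fin s, (S idx).1 = (i, j) then some (!(S h.choose).2) else none with hpdef
  have hpe : ∀ i j, p i j ≠ none ↔ ∃ idx : Fin s, (S idx).1 = (i, j) := by
    intro i j
    constructor
    · intro hne
      by_contra hex
      simp only [hpdef] at hne
      rw [dif_neg hex] at hne
      exact hne rfl
    · intro hex
      simp only [hpdef]
      rw [dif_pos hex]
      simp
  have hsupp : ∀ i, (Finset.univ.filter fun j => p i j ≠ none).card = m i := by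
    intro i
    simp only [hmdef]
    refine (Finset.card_bij (fun idx _ => (S idx).1.2) ?_ ?_ ?_).symm
    · intro idx hidx
      simp only [Finset.mem_filter, Finset.mem_univ, true_and] at hidx ⊢
      rw [hpe]
      exact ⟨idx, by rw [Prod.ext_iff]; exact ⟨hidx, rfl⟩⟩
    · intro a ha b hb hab
      simp only [Finset.mem_filter, Finset.mem_univ, true_and] at ha hb
      apply hS
      show (S a).1 = (S b).1
      rw [Prod.ext_iff]
      exact ⟨ha.trans hb.symm, hab⟩
    · intro j hj
      simp only [Finset.mem_filter, Finset.mem_univ, true_and] at hj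
      rw [hpe] at hj
      obtain ⟨idx, hidx⟩ := hj
      refine ⟨idx, ?_, ?_⟩
      · simp only [Finset.mem_filter, Finset.mem_univ, true_and]
        exact congrArg Prod.fst hidx
      · exact congrArg Prod.snd hidx
  have hm_le_s : ∀ i, m i ≤ s := by
    intro i
    simp only [hmdef]
    exact le_trans (Finset.card_filter_le _ _) (by simp)
  have hm_le : ∀ i, (Finset.univ.filter fun j => p i j ≠ none).card ≤ t := by
    intro i
    rw [hsupp i]
    exact le_trans (hm_le_s i) hts
  have hforce : ∀ f : Fin k × Fin L → Option Bool,
      (∀ idx : Fin s, f (S idx).1 = some (!(S idx).2)) ↔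
      ∀ i j, p i j ≠ none → f (i, j) = p i j := by
    intro f
    constructor
    · intro hf i j hne
      have hex := (hpe i j).1 hne
      have hv : p i j = some (!(S hex.choose).2) := by
        simp only [hpdef]
        rw [dif_pos hex]
      have h2 := hf hex.choose
      rw [hex.choose_spec] at h2
      rw [hv]
      exact h2
    · intro hf idx
      have hex : ∃ idx' : Fin s, (S idx').1 = ((S idx).1.1, (S idx).1.2) := ⟨idx, by simp⟩
      have hne : p (S idx).1.1 (S idx).1.2 ≠ none := (hpe _ _).2 hex
      have h1 := hf _ _ hne
      have hv : p (S idx).1.1 (S idx).1.2 = some (!(S hex.choose).2) := by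
        simp only [hpdef]
        rw [dif_pos hex]
      have heq : hex.choose = idx := by
        apply hS
        show (S hex.choose).1 = (S idx).1
        rw [hex.choose_spec]
      calc f (S idx).1 = f ((S idx).1.1, (S idx).1.2) := by rw [Prod.mk.eta]
        _ = p (S idx).1.1 (S idx).1.2 := h1
        _ = some (!(S hex.choose).2) := hv
        _ = some (!(S idx).2) := by rw [heq]
  have hmt : ∀ i : Fin k, m i ≤ t := fun i => le_trans (hm_le_s i) hts
  have hsum : ∑ i, m i = s := by
    simp only [hmdef]
    exact sum_fibers fun idx => (S idx).1.1
  refine Eq.trans (Eq.trans (card_filter_ext fun f => ?_)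
    (card_prod_block t p hm_le)) ?_
  · exact and_congr Iff.rfl (hforce f)
  · calc (∏ i, ((Fintype.card (Fin L) -
          (Finset.univ.filter fun j => p i j ≠ none).card).choose
          (t - (Finset.univ.filter fun j => p i j ≠ none).card) *
        2 ^ (t - (Finset.univ.filter fun j => p i j ≠ none).card)))
        = ∏ i, ((L - m i).choose (t - m i) * 2 ^ (t - m i)) := by
          refine Finset.prod_congr rfl fun i _ => ?_
          rw [hsupp i, Fintype.card_fin]
      _ = (∏ i, (L - m i).choose (t - m i)) * ∏ i, 2 ^ (t - m i) :=
          Finset.prod_mul_distrib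
      _ = (∏ i, (L - m i).choose (t - m i)) * 2 ^ (k * t - s) := by
          congr 1
          rw [Finset.prod_pow_eq_pow_sum]
          congr 1
          have h1 : ∑ i, (t - m i) + ∑ i, m i = ∑ _i : Fin k, t := by
            rw [← Finset.sum_add_distrib]
            exact Finset.sum_congr rfl fun i _ => by have := hmt i; omega
          have h2 : ∑ _i : Fin k, t = k * t := by
            simp [Finset.sum_const, Finset.card_univ, mul_comm]
          omega


/-- Final numeric assembly over the reals. -/
lemma final_real (NV cS cT fS fT E : ℕ)
    (h1 : cS + fS = NV) (h2 : cT + fT = NV) (h3 : fT ≤ fS)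
    (h4 : NV ≤ 2 ^ E * fT) (hN : 0 < NV) :
    ((cS : ℝ) / NV ≤ (cT : ℝ) / NV) ∧ (cS : ℝ) / NV ≤ 1 - 1 / 2 ^ E := by
  have hNR : (0 : ℝ) < (NV : ℝ) := by exact_mod_cast hN
  have h2E : (0 : ℝ) < (2 : ℝ) ^ E := by positivity
  have h3R : (fT : ℝ) ≤ (fS : ℝ) := by exact_mod_cast h3
  have h4R : (NV : ℝ) ≤ 2 ^ E * (fT : ℝ) := by exact_mod_cast h4
  have h1R : (cS : ℝ) + (fS : ℝ) = (NV : ℝ) := by exact_mod_cast h1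
  constructor
  · have hle : cS ≤ cT := by omega
    exact (div_le_div_iff_of_pos_right hNR).2 (by exact_mod_cast hle)
  · rw [div_le_iff₀ hNR]
    have hdiv : (NV : ℝ) / 2 ^ E ≤ (fS : ℝ) := by
      rw [div_le_iff₀ h2E]
      nlinarith [mul_le_mul_of_nonneg_left h3R (le_of_lt h2E)]
    have hring : (1 - 1 / (2 : ℝ) ^ E) * (NV : ℝ) = (NV : ℝ) - (NV : ℝ) / 2 ^ E := by
      field_simp
    linarith

end SurvHelpers

/-- **Survival probabilities for random `s`-restrictions (clique variables).**
For `1 ≤ s ≤ ((1/5)·log log n)^(1/3)` and the uniform distribution over `s`-restrictions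
of the variables `ω_{i,j}` (`i ∈ [k]`, `j ∈ [log n]`, `n = 2^L`): every `s`-tuple `S` of
literals on pairwise distinct variables survives with probability at most that of a
perfect `s`-tuple `T` (one whose variables all lie in one block), and hence with
probability at most `1 - 1/2^(s²+3s)`. -/
theorem survival_maximised_clique (L k s : ℕ) (hk : 1 ≤ k) (hs : 1 ≤ s)
    (hub : (s : ℝ) ≤ ((1 / 5) * Real.logb 2 (L : ℝ)) ^ ((1 : ℝ) / 3))
    (S T : Fin s → Lit (Fin k × Fin L))
    (hS : Function.Injective fun i => (S i).1)
    (hT : Function.Injective fun i => (T i).1)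
    (hTperfect : ∃ blk : Fin k, ∀ i : Fin s, (T i).1.1 = blk) :
    (((Finset.univ.filter fun ρ : Restriction (Fin k × Fin L) =>
          IsSRestriction s k L ρ ∧ Survives ρ S).card : ℝ) /
        ((Finset.univ.filter fun ρ : Restriction (Fin k × Fin L) =>
          IsSRestriction s k L ρ).card : ℝ) ≤
      ((Finset.univ.filter fun ρ : Restriction (Fin k × Fin L) =>
          IsSRestriction s k L ρ ∧ Survives ρ T).card : ℝ) /
        ((Finset.univ.filter fun ρ : Restriction (Fin k × Fin L) =>
          IsSRestriction s k L ρ).card : ℝ)) ∧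
    ((Finset.univ.filter fun ρ : Restriction (Fin k × Fin L) =>
          IsSRestriction s k L ρ ∧ Survives ρ S).card : ℝ) /
        ((Finset.univ.filter fun ρ : Restriction (Fin k × Fin L) =>
          IsSRestriction s k L ρ).card : ℝ) ≤
      1 - 1 / 2 ^ (s ^ 2 + 3 * s) := by
  have hL := hub_L L s hs hub
  set t := L / 2 ^ (s + 1) with htdef
  obtain ⟨hts, htL, hCb⟩ := numeric L s t hs hL htdef
  have hCpos : 0 < L.choose t := Nat.choose_pos htL
  -- the total number of s-restrictions
  have hNval : (Finset.univ.filter fun ρ : Restriction (Fin k × Fin L) =>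
      IsSRestriction s k L ρ).card = (L.choose t * 2 ^ t) ^ k := by
    refine Eq.trans (Eq.trans (card_filter_ext fun f => ?_)
      (card_prod_block (k := k) (α := Fin L) t (fun _ _ => none) fun i => by simp)) ?_
    · constructor
      · intro h
        exact ⟨h, fun i j hne => absurd rfl hne⟩
      · exact fun h => h.1
    · simp [Fintype.card_fin, Finset.prod_const, Finset.card_univ]
  -- the numbers of restrictions falsifying S, resp. T
  have hFSval : (Finset.univ.filter fun ρ : Restriction (Fin k × Fin L) =>
      IsSRestriction s k L ρ ∧ ¬ Survives ρ S).card =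
      (∏ i : Fin k, (L - (Finset.univ.filter fun idx : Fin s =>
          (S idx).1.1 = i).card).choose
          (t - (Finset.univ.filter fun idx : Fin s => (S idx).1.1 = i).card)) *
        2 ^ (k * t - s) := by
    refine Eq.trans (card_filter_ext fun f => ?_) (count_fail t hts S hS)
    exact and_congr Iff.rfl not_not
  have hFTval : (Finset.univ.filter fun ρ : Restriction (Fin k × Fin L) =>
      IsSRestriction s k L ρ ∧ ¬ Survives ρ T).card =
      (∏ i : Fin k, (L - (Finset.univ.filter fun idx : Fin s =>
          (T idx).1.1 = i).card).choose
          (t - (Finset.univ.filter fun idx : Fin s => (T idx).1.1 = i).card)) *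
        2 ^ (k * t - s) := by
    refine Eq.trans (card_filter_ext fun f => ?_) (count_fail t hts T hT)
    exact and_congr Iff.rfl not_not
  -- survivors + non-survivors = total
  have hsplit : ∀ W : Fin s → Lit (Fin k × Fin L),
      (Finset.univ.filter fun ρ : Restriction (Fin k × Fin L) =>
        IsSRestriction s k L ρ ∧ Survives ρ W).card +
      (Finset.univ.filter fun ρ : Restriction (Fin k × Fin L) =>
        IsSRestriction s k L ρ ∧ ¬ Survives ρ W).card =
      (Finset.univ.filter fun ρ : Restriction (Fin k × Fin L) =>
        IsSRestriction s k L ρ).card := by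
    intro W
    have e1 := Finset.filter_filter
      (fun ρ : Restriction (Fin k × Fin L) => IsSRestriction s k L ρ)
      (fun ρ => Survives ρ W) (Finset.univ)
    have e2 := Finset.filter_filter
      (fun ρ : Restriction (Fin k × Fin L) => IsSRestriction s k L ρ)
      (fun ρ => ¬ Survives ρ W) (Finset.univ)
    have hA : (Finset.univ.filter fun ρ : Restriction (Fin k × Fin L) =>
        IsSRestriction s k L ρ ∧ Survives ρ W).card =
        ((Finset.univ.filter fun ρ : Restriction (Fin k × Fin L) =>
          IsSRestriction s k L ρ).filter fun ρ => Survives ρ W).card :=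
      Eq.trans (card_filter_ext fun ρ => Iff.rfl) (congrArg Finset.card e1.symm)
    have hB : (Finset.univ.filter fun ρ : Restriction (Fin k × Fin L) =>
        IsSRestriction s k L ρ ∧ ¬ Survives ρ W).card =
        ((Finset.univ.filter fun ρ : Restriction (Fin k × Fin L) =>
          IsSRestriction s k L ρ).filter fun ρ => ¬ Survives ρ W).card :=
      Eq.trans (card_filter_ext fun ρ => Iff.rfl) (congrArg Finset.card e2.symm)
    rw [hA, hB]
    exact Finset.card_filter_add_card_filter_not (p := fun ρ => Survives ρ W)
  -- sum of block multiplicities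
  have hsumS : ∑ i : Fin k, (Finset.univ.filter fun idx : Fin s =>
      (S idx).1.1 = i).card = s := by
    simpa using sum_fibers fun idx => (S idx).1.1
  -- product comparison
  have hprodS : (L - s).choose (t - s) * (L.choose t) ^ k ≤
      L.choose t * ∏ i : Fin k, (L - (Finset.univ.filter fun idx : Fin s =>
          (S idx).1.1 = i).card).choose
          (t - (Finset.univ.filter fun idx : Fin s => (S idx).1.1 = i).card) := by
    have h0 := prodC L t htL
      (fun i => (Finset.univ.filter fun idx : Fin s => (S idx).1.1 = i).card)
      Finset.univ (by simp only [hsumS]; exact hts)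
    simpa [hsumS, Finset.card_univ] using h0
  have hAS : (L - s).choose (t - s) * (L.choose t) ^ (k - 1) ≤
      ∏ i : Fin k, (L - (Finset.univ.filter fun idx : Fin s =>
          (S idx).1.1 = i).card).choose
          (t - (Finset.univ.filter fun idx : Fin s => (S idx).1.1 = i).card) := by
    have hkk : (L.choose t) ^ k = (L.choose t) ^ (k - 1) * L.choose t := by
      rw [← pow_succ]
      congr 1
      omega
    have h2 : L.choose t * ((L - s).choose (t - s) * (L.choose t) ^ (k - 1)) ≤
        L.choose t * ∏ i : Fin k, (L - (Finset.univ.filter fun idx : Fin s =>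
          (S idx).1.1 = i).card).choose
          (t - (Finset.univ.filter fun idx : Fin s => (S idx).1.1 = i).card) := by
      calc L.choose t * ((L - s).choose (t - s) * (L.choose t) ^ (k - 1))
          = (L - s).choose (t - s) * (L.choose t) ^ k := by rw [hkk]; ring
        _ ≤ _ := hprodS
    exact Nat.le_of_mul_le_mul_left h2 hCpos
  -- the perfect tuple's product in closed form
  obtain ⟨blk, hblk⟩ := hTperfect
  have hmTblk : (Finset.univ.filter fun idx : Fin s => (T idx).1.1 = blk).card = s := by
    rw [Finset.filter_true_of_mem fun idx _ => hblk idx]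
    simp
  have hmT0 : ∀ i : Fin k, i ≠ blk →
      (Finset.univ.filter fun idx : Fin s => (T idx).1.1 = i).card = 0 := by
    intro i hi
    rw [Finset.filter_false_of_mem fun idx _ h => by rw [hblk idx] at h; exact hi h.symm]
    simp
  have hprodT : (∏ i : Fin k, (L - (Finset.univ.filter fun idx : Fin s =>
          (T idx).1.1 = i).card).choose
          (t - (Finset.univ.filter fun idx : Fin s => (T idx).1.1 = i).card)) =
      (L - s).choose (t - s) * (L.choose t) ^ (k - 1) := by
    rw [← Finset.mul_prod_erase Finset.univ _ (Finset.mem_univ blk)]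
    congr 1
    · rw [hmTblk]
    · have hz : ∀ i ∈ Finset.univ.erase blk,
          (L - (Finset.univ.filter fun idx : Fin s => (T idx).1.1 = i).card).choose
          (t - (Finset.univ.filter fun idx : Fin s => (T idx).1.1 = i).card) =
          L.choose t := by
        intro i hi
        rw [hmT0 i (Finset.ne_of_mem_erase hi)]
        simp
      rw [Finset.prod_congr rfl hz, Finset.prod_const,
        Finset.card_erase_of_mem (Finset.mem_univ blk), Finset.card_univ, Fintype.card_fin]
  -- the total is at most 2^(s²+3s) times the number falsifying T
  have hpowsplit : k * t - s = (t - s) + t * (k - 1) := by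
    have hk1 : k - 1 + 1 = k := by omega
    have h5 : k * t = t * (k - 1) + t := by
      calc k * t = ((k - 1) + 1) * t := by rw [hk1]
        _ = t * (k - 1) + t := by ring
    omega
  have hsingle : L.choose t * 2 ^ t ≤
      2 ^ (s ^ 2 + 3 * s) * ((L - s).choose (t - s) * 2 ^ (t - s)) := by
    calc L.choose t * 2 ^ t
        ≤ (2 ^ (s ^ 2 + 2 * s) * (L - s).choose (t - s)) * 2 ^ t :=
          Nat.mul_le_mul_right _ hCb
      _ = 2 ^ (s ^ 2 + 3 * s) * ((L - s).choose (t - s) * 2 ^ (t - s)) := by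
          rw [show (2 : ℕ) ^ t = 2 ^ s * 2 ^ (t - s) by rw [← pow_add]; congr 1; omega,
            show (2 : ℕ) ^ (s ^ 2 + 3 * s) = 2 ^ (s ^ 2 + 2 * s) * 2 ^ s by
              rw [← pow_add]; congr 1; ring]
          ring
  have hNleT : (L.choose t * 2 ^ t) ^ k ≤
      2 ^ (s ^ 2 + 3 * s) *
        ((L - s).choose (t - s) * (L.choose t) ^ (k - 1) * 2 ^ (k * t - s)) := by
    calc (L.choose t * 2 ^ t) ^ k
        = (L.choose t * 2 ^ t) * (L.choose t * 2 ^ t) ^ (k - 1) := by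
          conv_lhs => rw [show k = (k - 1) + 1 by omega]
          rw [pow_succ']
      _ ≤ (2 ^ (s ^ 2 + 3 * s) * ((L - s).choose (t - s) * 2 ^ (t - s))) *
            (L.choose t * 2 ^ t) ^ (k - 1) := Nat.mul_le_mul_right _ hsingle
      _ = 2 ^ (s ^ 2 + 3 * s) *
            ((L - s).choose (t - s) * (L.choose t) ^ (k - 1) * 2 ^ (k * t - s)) := by
          rw [mul_pow, hpowsplit, pow_add, pow_mul]
          ring
  -- assemble
  have hfT_le_fS : (L - s).choose (t - s) * (L.choose t) ^ (k - 1) * 2 ^ (k * t - s) ≤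
      (∏ i : Fin k, (L - (Finset.univ.filter fun idx : Fin s =>
          (S idx).1.1 = i).card).choose
          (t - (Finset.univ.filter fun idx : Fin s => (S idx).1.1 = i).card)) *
        2 ^ (k * t - s) := Nat.mul_le_mul_right _ hAS
  have heqS := hsplit S
  have heqT := hsplit T
  rw [hFSval, hNval] at heqS
  rw [hFTval, hprodT, hNval] at heqT
  have hNpos : 0 < (L.choose t * 2 ^ t) ^ k :=
    pow_pos (Nat.mul_pos hCpos (pow_pos two_pos t)) k
  have hNR : (0 : ℝ) < (((L.choose t * 2 ^ t) ^ k : ℕ) : ℝ) := by exact_mod_cast hNpos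
  rw [hNval]
  exact final_real ((L.choose t * 2 ^ t) ^ k) _ _ _ _ (s ^ 2 + 3 * s) heqS heqT
    hfT_le_fS hNleT hNpos

end PC
end

section
/- Let n be a power of 2, m > n, and let 0 ≤ t < log n. For every t-bit restriction ρ, every Resolution refutation of BinPHP^m_n↾ρ contains a clause whose literals involve the variables of at least n/2^t distinct pigeons. -/
open scoped Classical

namespace PC

/-! ### Auxiliary material for `binphp_wide_clause` -/

section BinPHPAux

noncomputable def toFin (L : ℕ) (g : Fin L → Bool) : Fin (2 ^ L) :=
  finFunctionFinEquiv (fun j => if g j then 1 else 0)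

lemma testBit_toFin (L : ℕ) (g : Fin L → Bool) (j : Fin L) :
    (toFin L g).val.testBit j.val = g j := by
  have h := finFunctionFinEquiv_symm_apply_val (toFin L g) j
  rw [toFin, Equiv.symm_apply_apply] at h
  rw [Nat.testBit_eq_decide_div_mod_eq, toFin, ← h]
  cases hg : g j <;> simp [hg]

lemma fin_ext_testBit {L : ℕ} (a b : Fin (2 ^ L))
    (h : ∀ j : Fin L, a.val.testBit j.val = b.val.testBit j.val) : a = b := by
  apply finFunctionFinEquiv.symm.injective
  funext j
  apply Fin.ext
  rw [finFunctionFinEquiv_symm_apply_val, finFunctionFinEquiv_symm_apply_val]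
  have hj := h j
  rw [Nat.testBit_eq_decide_div_mod_eq, Nat.testBit_eq_decide_div_mod_eq] at hj
  have h1 := Nat.mod_two_eq_zero_or_one (a.val / 2 ^ j.val)
  have h2 := Nat.mod_two_eq_zero_or_one (b.val / 2 ^ j.val)
  rcases h1 with h1 | h1 <;> rcases h2 with h2 | h2 <;> simp [h1, h2] at hj ⊢

/-- A hole `a` is consistent with the restriction `ρ` at pigeon `i`. -/
def ConsHole {m L : ℕ} (ρ : Restriction (Fin m × Fin L)) (i : Fin m) (a : Fin (2 ^ L)) : Prop :=
  ∀ j : Fin L, ρ (i, j) = none ∨ ρ (i, j) = some (a.val.testBit j.val)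

lemma exists_fresh_hole {m L t : ℕ} (ρ : Restriction (Fin m × Fin L))
    (hρ : IsTBitRestriction t m L ρ) (i : Fin m)
    (used : Finset (Fin (2 ^ L))) (hu : used.card < 2 ^ (L - t)) :
    ∃ a : Fin (2 ^ L), ConsHole ρ i a ∧ a ∉ used := by
  classical
  set Free : Finset (Fin L) := Finset.univ.filter (fun j => ρ (i, j) = none) with hFree
  have hFcard : Free.card = L - t := by
    have h1 := hρ i
    have h2 : Free = Finset.univ.filter (fun j => ¬ (ρ (i, j) ≠ none)) := by
      simp [hFree]
    have h3 := Finset.card_filter_add_card_filter_not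
      (s := (Finset.univ : Finset (Fin L))) (p := fun j : Fin L => ρ (i, j) ≠ none)
    rw [h1, Finset.card_univ, Fintype.card_fin, ← h2] at h3
    omega
  have key : ∀ u : ↥Free → Bool, ∀ j : Fin L,
      (toFin L (fun j' => if h : j' ∈ Free then u ⟨j', h⟩ else (ρ (i, j')).getD false)).val.testBit
        j.val = (if h : j ∈ Free then u ⟨j, h⟩ else (ρ (i, j)).getD false) :=
    fun u j => testBit_toFin L _ j
  have hFinj : Function.Injective (fun u : ↥Free → Bool =>
      toFin L (fun j' => if h : j' ∈ Free then u ⟨j', h⟩ else (ρ (i, j')).getD false)) := by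
    intro u v huv
    funext ⟨j, hj⟩
    have h := congrArg (fun a : Fin (2 ^ L) => a.val.testBit j.val) huv
    simp only at h
    rw [key u j, key v j, dif_pos hj, dif_pos hj] at h
    exact h
  have hFcons : ∀ u : ↥Free → Bool, ConsHole ρ i
      (toFin L (fun j' => if h : j' ∈ Free then u ⟨j', h⟩ else (ρ (i, j')).getD false)) := by
    intro u j
    cases hj : ρ (i, j) with
    | none => exact Or.inl rfl
    | some c =>
      right
      have hjF : j ∉ Free := by simp [hFree, hj]
      rw [key u j, dif_neg hjF, hj]
      rfl
  by_contra hcon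
  push_neg at hcon
  have hcard : Fintype.card (↥Free → Bool) ≤ used.card := by
    have := Finset.card_le_card_of_injOn
      (s := (Finset.univ : Finset (↥Free → Bool)))
      (f := fun u : ↥Free → Bool =>
        toFin L (fun j' => if h : j' ∈ Free then u ⟨j', h⟩ else (ρ (i, j')).getD false))
      (fun u _ => hcon _ (hFcons u)) (Function.Injective.injOn hFinj)
    simpa using this
  rw [Fintype.card_fun, Fintype.card_coe, hFcard, Fintype.card_bool] at hcard
  omega

/-- The pigeons mentioned in a clause. -/
def Pig {m L : ℕ} (C : Clause (Fin m × Fin L)) : Finset (Fin m) := C.image fun l => l.1.1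

/-- `α` is a partial matching, consistent with `ρ`, falsifying `C`, with domain
contained in the pigeons of `C`. -/
def Good {m L : ℕ} (ρ : Restriction (Fin m × Fin L)) (α : Fin m → Option (Fin (2 ^ L)))
    (C : Clause (Fin m × Fin L)) : Prop :=
  (∀ ⦃i i' : Fin m⦄ ⦃a : Fin (2 ^ L)⦄, α i = some a → α i' = some a → i = i') ∧
  (∀ ⦃i : Fin m⦄ ⦃a : Fin (2 ^ L)⦄, α i = some a → ConsHole ρ i a) ∧
  (∀ l ∈ C, ∃ a : Fin (2 ^ L), α l.1.1 = some a ∧ a.val.testBit l.1.2.val = !l.2) ∧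
  (∀ ⦃i : Fin m⦄ ⦃a : Fin (2 ^ L)⦄, α i = some a → i ∈ Pig C)

lemma ite_none_eq_some {β : Type*} {c : Prop} [Decidable c] {o : Option β} {a : β}
    (h : (if c then o else none) = some a) : o = some a ∧ c := by
  by_cases hc : c
  · rw [if_pos hc] at h
    exact ⟨h, hc⟩
  · rw [if_neg hc] at h
    exact absurd h (by simp)

lemma mem_Pig {m L : ℕ} {C : Clause (Fin m × Fin L)} {l : Lit (Fin m × Fin L)}
    (hl : l ∈ C) : l.1.1 ∈ Pig C := Finset.mem_image_of_mem _ hl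

lemma good_subset {m L : ℕ} {ρ : Restriction (Fin m × Fin L)}
    {α : Fin m → Option (Fin (2 ^ L))} {C C' : Clause (Fin m × Fin L)}
    (hg : Good ρ α C) (hsub : C' ⊆ C) :
    Good ρ (fun p => if p ∈ Pig C' then α p else none) C' := by
  obtain ⟨hinj, hcons, hfals, hdom⟩ := hg
  refine ⟨?_, ?_, ?_, ?_⟩
  · intro p q a h1 h2
    exact hinj (ite_none_eq_some h1).1 (ite_none_eq_some h2).1
  · intro p a h1
    exact hcons (ite_none_eq_some h1).1
  · intro l hl
    obtain ⟨a, ha, hta⟩ := hfals l (hsub hl)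
    refine ⟨a, ?_, hta⟩
    show (if l.1.1 ∈ Pig C' then α l.1.1 else none) = some a
    rw [if_pos (mem_Pig hl)]
    exact ha
  · intro p a h1
    exact (ite_none_eq_some h1).2

lemma good_step {m L : ℕ} {ρ : Restriction (Fin m × Fin L)}
    {α : Fin m → Option (Fin (2 ^ L))} {C C' : Clause (Fin m × Fin L)}
    (hg : Good ρ α C) (x : Fin m × Fin L) (s : Bool) (hx : (x, s) ∈ C')
    (hsub : ∀ l ∈ C', l ≠ (x, s) → l ∈ C)
    {b : Fin (2 ^ L)} (hab : α x.1 = some b) (hbit : b.val.testBit x.2.val = !s) :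
    Good ρ (fun p => if p ∈ Pig C' then α p else none) C' := by
  obtain ⟨hinj, hcons, hfals, hdom⟩ := hg
  refine ⟨?_, ?_, ?_, ?_⟩
  · intro p q a h1 h2
    exact hinj (ite_none_eq_some h1).1 (ite_none_eq_some h2).1
  · intro p a h1
    exact hcons (ite_none_eq_some h1).1
  · intro l hl
    have hmem : l.1.1 ∈ Pig C' := mem_Pig hl
    by_cases hls : l = (x, s)
    · subst hls
      refine ⟨b, ?_, hbit⟩
      show (if x.1 ∈ Pig C' then α x.1 else none) = some b
      rw [if_pos hmem]
      exact hab
    · obtain ⟨a, ha, hta⟩ := hfals l (hsub l hl hls)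
      refine ⟨a, ?_, hta⟩
      show (if l.1.1 ∈ Pig C' then α l.1.1 else none) = some a
      rw [if_pos hmem]
      exact ha
  · intro p a h1
    exact (ite_none_eq_some h1).2

lemma good_extend {m L : ℕ} {ρ : Restriction (Fin m × Fin L)}
    {α : Fin m → Option (Fin (2 ^ L))} {C C' : Clause (Fin m × Fin L)}
    (hg : Good ρ α C) (x : Fin m × Fin L) (s : Bool) (hx : (x, s) ∈ C')
    (hsub : ∀ l ∈ C', l ≠ (x, s) → l ∈ C)
    (hαx : α x.1 = none) (hCnoi : ∀ l ∈ C, l.1.1 ≠ x.1)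
    {b : Fin (2 ^ L)} (hbcons : ConsHole ρ x.1 b) (hfresh : ∀ p, α p ≠ some b)
    (hbit : b.val.testBit x.2.val = !s) :
    Good ρ (fun p => if p = x.1 then some b else if p ∈ Pig C' then α p else none) C' := by
  obtain ⟨hinj, hcons, hfals, hdom⟩ := hg
  refine ⟨?_, ?_, ?_, ?_⟩
  · intro p q a h1 h2
    simp only at h1 h2
    by_cases hp : p = x.1 <;> by_cases hq : q = x.1
    · rw [hp, hq]
    · rw [if_pos hp] at h1
      rw [if_neg hq] at h2
      have hab : b = a := Option.some.inj h1
      exact absurd ((ite_none_eq_some h2).1) (hab ▸ hfresh q)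
    · rw [if_neg hp] at h1
      rw [if_pos hq] at h2
      have hab : b = a := Option.some.inj h2
      exact absurd ((ite_none_eq_some h1).1) (hab ▸ hfresh p)
    · rw [if_neg hp] at h1
      rw [if_neg hq] at h2
      exact hinj (ite_none_eq_some h1).1 (ite_none_eq_some h2).1
  · intro p a h1
    simp only at h1
    by_cases hp : p = x.1
    · rw [if_pos hp] at h1
      have hab : b = a := Option.some.inj h1
      rw [hp, ← hab]
      exact hbcons
    · rw [if_neg hp] at h1
      exact hcons (ite_none_eq_some h1).1
  · intro l hl
    by_cases hls : l = (x, s)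
    · subst hls
      refine ⟨b, ?_, hbit⟩
      show (if x.1 = x.1 then some b else if x.1 ∈ Pig C' then α x.1 else none) = some b
      rw [if_pos rfl]
    · have hlC := hsub l hl hls
      obtain ⟨a, ha, hta⟩ := hfals l hlC
      refine ⟨a, ?_, hta⟩
      show (if l.1.1 = x.1 then some b else if l.1.1 ∈ Pig C' then α l.1.1 else none) = some a
      rw [if_neg (hCnoi l hlC), if_pos (mem_Pig hl)]
      exact ha
  · intro p a h1
    simp only at h1
    by_cases hp : p = x.1
    · rw [hp]
      exact mem_Pig hx
    · rw [if_neg hp] at h1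
      exact (ite_none_eq_some h1).2

end BinPHPAux

/-- Every Resolution refutation of `BinPHP^m_n↾ρ`, for a `t`-bit restriction `ρ`,
contains a clause mentioning the variables of at least `n/2^t` distinct pigeons. -/
theorem binphp_wide_clause (L n m t : ℕ) (hn : n = 2 ^ L) (hm : n < m) (ht : t < L)
    (ρ : Restriction (Fin m × Fin L)) (hρ : IsTBitRestriction t m L ρ)
    (π : List (Clause (Fin m × Fin L)))
    (hπ : IsResRefutation (restrictCnf ρ (BinPHP m L)) π) :
    ∃ C ∈ π, n / 2 ^ t ≤ (C.image fun l => l.1.1).card := by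
  classical
  by_contra hcon
  push_neg at hcon
  have hd : n / 2 ^ t = 2 ^ (L - t) := by
    subst hn
    exact Nat.pow_div ht.le (by norm_num)
  have hwidth : ∀ C ∈ π, (Pig C).card < 2 ^ (L - t) := by
    intro C hC
    have h := hcon C hC
    rw [hd] at h
    exact h
  obtain ⟨hsteps, hlast⟩ := hπ
  have key : ∀ k : ℕ, ∀ hk : k < π.length, ∀ α, ¬ Good ρ α (π.get ⟨k, hk⟩) := by
    intro k
    induction k using Nat.strong_induction_on with
    | _ k IH =>
    intro hk α hα
    have hprev : ∀ C' ∈ π.take k, (∀ β, ¬ Good ρ β C') ∧ (Pig C').card < 2 ^ (L - t) := by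
      intro C' hC'
      obtain ⟨j, hj, hjC⟩ := List.getElem_of_mem hC'
      rw [List.length_take] at hj
      have hjlen : j < π.length := by omega
      have hEq : π.get ⟨j, hjlen⟩ = C' := by
        rw [List.get_eq_getElem, ← hjC, List.getElem_take]
      refine ⟨fun β hβ => IH j (by omega) hjlen β (hEq ▸ hβ), ?_⟩
      exact hwidth C' (List.mem_of_mem_take hC')
    have hstep := hsteps ⟨k, hk⟩
    set C := π.get ⟨k, hk⟩ with hCdef
    obtain ⟨hinj, hcons, hfals, hdom⟩ := id hα
    rcases hstep with haxiom | hres | hweak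
    · -- axiom case
      obtain ⟨C0, hC0, hrestr⟩ := haxiom
      obtain ⟨i, i', hii, a, hC0eq⟩ := hC0
      subst hC0eq
      unfold restrictClause at hrestr
      split_ifs at hrestr with hsat
      replace hrestr := Option.some.inj hrestr
      push_neg at hsat
      have main : ∀ p : Fin m,
          pigeonLits m L p a.val ⊆
            pigeonLits m L i a.val ∪ pigeonLits m L i' a.val → α p = some a := by
        intro p hpsub
        have hlits : ∀ j : Fin L,
            ((p, j), !(a.val.testBit j.val)) ∈ pigeonLits m L p a.val := by
          intro j
          exact Finset.mem_image_of_mem _ (Finset.mem_univ j)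
        obtain ⟨j0, hj0⟩ : ∃ j0 : Fin L, ρ (p, j0) = none := by
          by_contra hno
          push_neg at hno
          have huniv : (Finset.univ.filter fun j : Fin L => ρ (p, j) ≠ none)
              = Finset.univ := by
            apply Finset.eq_univ_iff_forall.mpr
            intro j
            simp [hno j]
          have hcard := hρ p
          rw [huniv, Finset.card_univ, Fintype.card_fin] at hcard
          omega
        have hl0C : ((p, j0), !(a.val.testBit j0.val)) ∈ C := by
          rw [← hrestr]
          exact Finset.mem_filter.mpr ⟨hpsub (hlits j0), hj0⟩
        obtain ⟨b, hb, -⟩ := hfals _ hl0C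
        have hba : b = a := by
          apply fin_ext_testBit
          intro j
          cases hρj : ρ (p, j) with
          | none =>
            have hlC : ((p, j), !(a.val.testBit j.val)) ∈ C := by
              rw [← hrestr]
              exact Finset.mem_filter.mpr ⟨hpsub (hlits j), hρj⟩
            obtain ⟨b', hb', htb'⟩ := hfals _ hlC
            have hbb : b = b' := Option.some.inj (hb.symm.trans hb')
            rw [← hbb] at htb'
            simpa using htb'
          | some c =>
            have h1 := hcons hb j
            rw [hρj] at h1
            rcases h1 with h1 | h1
            · exact absurd h1 (by simp)
            have hcb : c = b.val.testBit j.val := Option.some.inj h1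
            have h2 := hsat ((p, j), !(a.val.testBit j.val)) (hpsub (hlits j))
            rw [hρj] at h2
            have hca : c ≠ !(a.val.testBit j.val) := fun hEq => h2 (by rw [hEq])
            rw [← hcb]
            cases hav : a.val.testBit j.val <;> cases hc : c <;>
              simp_all
        rw [hba] at hb
        exact hb
      have hi := main i Finset.subset_union_left
      have hi' := main i' Finset.subset_union_right
      exact hii (hinj hi hi')
    · -- resolution case
      obtain ⟨C₁, hC₁, C₂, hC₂, x, hx1, hx2, hCeq⟩ := hres
      obtain ⟨hng1, hw1⟩ := hprev C₁ hC₁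
      obtain ⟨hng2, hw2⟩ := hprev C₂ hC₂
      cases hαx : α x.1 with
      | some b =>
        cases hbit : b.val.testBit x.2.val with
        | false =>
          refine hng1 _ (good_step hα x true hx1 ?_ hαx (by rw [hbit]; rfl))
          intro l hl hlne
          rw [hCeq]
          exact Finset.mem_union_left _ (Finset.mem_erase.mpr ⟨hlne, hl⟩)
        | true =>
          refine hng2 _ (good_step hα x false hx2 ?_ hαx (by rw [hbit]; rfl))
          intro l hl hlne
          rw [hCeq]
          exact Finset.mem_union_right _ (Finset.mem_erase.mpr ⟨hlne, hl⟩)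
      | none =>
        have hCnoi : ∀ l ∈ C, l.1.1 ≠ x.1 := by
          intro l hl hEq
          obtain ⟨a, ha, -⟩ := hfals l hl
          rw [hEq, hαx] at ha
          exact absurd ha (by simp)
        have husedcard : ((Pig C).biUnion (fun p => (α p).toFinset)).card < 2 ^ (L - t) := by
          calc ((Pig C).biUnion (fun p => (α p).toFinset)).card
              ≤ ∑ p ∈ Pig C, ((α p).toFinset).card := Finset.card_biUnion_le
            _ ≤ ∑ _p ∈ Pig C, 1 := Finset.sum_le_sum (fun p _ => by
                cases α p <;> simp [Option.toFinset])
            _ = (Pig C).card := by simp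
            _ < 2 ^ (L - t) := hwidth C (hCdef ▸ π.get_mem _)
        obtain ⟨b, hbcons, hbnew⟩ := exists_fresh_hole ρ hρ x.1 _ husedcard
        have hfresh : ∀ p, α p ≠ some b := by
          intro p hp
          exact hbnew (Finset.mem_biUnion.mpr ⟨p, hdom hp, by simp [hp]⟩)
        cases hbit : b.val.testBit x.2.val with
        | false =>
          refine hng1 _ (good_extend hα x true hx1 ?_ hαx hCnoi hbcons hfresh
            (by rw [hbit]; rfl))
          intro l hl hlne
          rw [hCeq]
          exact Finset.mem_union_left _ (Finset.mem_erase.mpr ⟨hlne, hl⟩)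
        | true =>
          refine hng2 _ (good_extend hα x false hx2 ?_ hαx hCnoi hbcons hfresh
            (by rw [hbit]; rfl))
          intro l hl hlne
          rw [hCeq]
          exact Finset.mem_union_right _ (Finset.mem_erase.mpr ⟨hlne, hl⟩)
    · -- weakening case
      obtain ⟨C', hC'mem, l, hCeq⟩ := hweak
      obtain ⟨hng, -⟩ := hprev C' hC'mem
      refine hng _ (good_subset hα ?_)
      rw [hCeq]
      exact Finset.subset_insert l C'
  have hne : π ≠ [] := by rintro rfl; simp at hlast
  have hlen : 0 < π.length := List.length_pos_iff.mpr hne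
  rw [List.getLast?_eq_getLast hne] at hlast
  have hlastget : π.get ⟨π.length - 1, by omega⟩ = ∅ := by
    rw [List.get_eq_getElem, ← Option.some.inj hlast, List.getLast_eq_getElem]
  refine key (π.length - 1) (by omega) (fun _ => none) ?_
  rw [hlastget]
  exact ⟨fun _ _ _ h => by simp at h, fun _ _ h => by simp at h,
    fun l hl => absurd hl (Finset.notMem_empty l), fun _ _ h => by simp at h⟩
end PC
end
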